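/- arXiv:2305.03918 — 10 statements merged into one kernel-verified Lean document; each statement's English description precedes it below -/
import Mathlib

section
/- Let A and S be n×n complex matrices, Cp and Cu p×n complex matrices, δ ∈ ℂ, and s ∈ ℂ such that both sI − A and sI − A − δS are invertible. Then T^p(s,δ) = T^u(s,δ)·(sI − A)⁻¹·(sI − A − δS); that is, the perturbed-scaled and unperturbed-scaled error transfer matrices differ by the frequency correction factor (sI − A)⁻¹(sI − A − δS). -/
lemma Tp_aux {n p : ℕ} (Φ Ψ D : Matrix (Fin n) (Fin n) ℂ)
    (Cp Cu : Matrix (Fin p) (Fin n) ℂ)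
    (hD : D = Φ - Ψ)
    (hΦ1 : Φ⁻¹ * Φ = 1) (hΦ2 : Φ * Φ⁻¹ = 1) (hΨ1 : Ψ⁻¹ * Ψ = 1) :
    (Cp - Cu) + Cu * Φ⁻¹ * D = ((Cp - Cu) + Cp * Ψ⁻¹ * D) * (Φ⁻¹ * Ψ) := by
  have key : Ψ⁻¹ * D * (Φ⁻¹ * Ψ) = Φ⁻¹ * D := by
    rw [hD]
    calc Ψ⁻¹ * (Φ - Ψ) * (Φ⁻¹ * Ψ)
        = Ψ⁻¹ * (Φ * Φ⁻¹) * Ψ - Ψ⁻¹ * Ψ * (Φ⁻¹ * Ψ) := by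
          simp only [Matrix.mul_sub, Matrix.sub_mul, Matrix.mul_assoc]
      _ = 1 - Φ⁻¹ * Ψ := by rw [hΦ2, Matrix.mul_one, hΨ1, Matrix.one_mul]
      _ = Φ⁻¹ * Φ - Φ⁻¹ * Ψ := by rw [hΦ1]
      _ = Φ⁻¹ * (Φ - Ψ) := by rw [Matrix.mul_sub]
  have hΦΨ : Φ⁻¹ * Ψ = 1 - Φ⁻¹ * D := by
    rw [hD, Matrix.mul_sub, hΦ1, sub_sub_cancel]
  calc (Cp - Cu) + Cu * Φ⁻¹ * D
      = (Cp - Cu) * (1 - Φ⁻¹ * D) + Cp * (Φ⁻¹ * D) := by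
        simp only [Matrix.mul_sub, Matrix.sub_mul, Matrix.mul_one, Matrix.mul_assoc]
        abel
    _ = (Cp - Cu) * (Φ⁻¹ * Ψ) + Cp * (Ψ⁻¹ * D * (Φ⁻¹ * Ψ)) := by rw [key, hΦΨ]
    _ = ((Cp - Cu) + Cp * Ψ⁻¹ * D) * (Φ⁻¹ * Ψ) := by
        simp only [Matrix.add_mul, Matrix.mul_assoc]

/-- The perturbed-scaled and unperturbed-scaled error transfer matrices differ by the
frequency correction factor `(sI − A)⁻¹ (sI − A − δS)`:
`T^p(s,δ) = T^u(s,δ) (sI − A)⁻¹ (sI − A − δS)`. -/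
theorem Tp_eq_Tu_mul_correction
    {n p : ℕ}
    (A S : Matrix (Fin n) (Fin n) ℂ) (Cp Cu : Matrix (Fin p) (Fin n) ℂ)
    (δ s : ℂ)
    (h1 : IsUnit (s • (1 : Matrix (Fin n) (Fin n) ℂ) - A))
    (h2 : IsUnit (s • (1 : Matrix (Fin n) (Fin n) ℂ) - A - δ • S)) :
    (Cp - Cu) + Cu * (s • (1 : Matrix (Fin n) (Fin n) ℂ) - A)⁻¹ * (δ • S)
      = ((Cp - Cu) + Cp * (s • (1 : Matrix (Fin n) (Fin n) ℂ) - A - δ • S)⁻¹ * (δ • S))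
        * ((s • (1 : Matrix (Fin n) (Fin n) ℂ) - A)⁻¹
            * (s • (1 : Matrix (Fin n) (Fin n) ℂ) - A - δ • S)) := by
  have hd1 := (Matrix.isUnit_iff_isUnit_det _).mp h1
  have hd2 := (Matrix.isUnit_iff_isUnit_det _).mp h2
  exact Tp_aux _ _ _ Cp Cu (sub_sub_cancel _ _).symm
    (Matrix.nonsing_inv_mul _ hd1) (Matrix.mul_nonsing_inv _ hd1)
    (Matrix.nonsing_inv_mul _ hd2)
end

section
/- Let M be a nonzero p×q complex matrix. Then the infimum of ‖Δ‖ over all q×p complex matrices Δ such that det(I_p − M·Δ) = 0 equals ‖M‖⁻¹, where ‖·‖ is the L2 operator norm; moreover this infimum is attained by some Δ with ‖Δ‖ = ‖M‖⁻¹ and det(I_p − M·Δ) = 0. -/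
/-!
If `det (1 - M Δ) = 0` then `1 - M Δ` is not invertible, so by the Neumann series
`1 ≤ ‖M Δ‖ ≤ ‖M‖ ‖Δ‖`. Conversely, by compactness of the unit ball there is `‖x‖ ≤ 1` with
`‖M x‖ = ‖M‖`; the rank-one map `Δ = ‖M‖⁻² |x⟩⟨M x|` sends `M x` to `x`, so `M x` is a fixed
vector of `M Δ`, and `‖Δ‖ = ‖x‖ / ‖M‖ ≤ ‖M‖⁻¹`, which by the first part is an equality.
-/

open scoped Matrix.Norms.L2Operator
open Matrix WithLp InnerProductSpace

theorem ContinuousLinearMap.exists_norm_le_one_and_norm_apply_eq_opNorm {𝕜 E F : Type*}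
    [DenselyNormedField 𝕜] [NormedAddCommGroup E] [NormedSpace 𝕜 E] [ProperSpace E]
    [SeminormedAddCommGroup F] [NormedSpace 𝕜 F] (T : E →L[𝕜] F) :
    ∃ x, ‖x‖ ≤ 1 ∧ ‖T x‖ = ‖T‖ := by
  have hball : (Metric.closedBall (0 : E) 1).Nonempty := Metric.nonempty_closedBall.2 zero_le_one
  obtain ⟨x, hx, hmax⟩ :=
    (isCompact_closedBall (0 : E) 1).exists_isMaxOn hball T.continuous.norm.continuousOn
  rw [mem_closedBall_zero_iff] at hx
  refine ⟨x, hx, le_antisymm (T.unit_le_opNorm x hx) ?_⟩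
  rw [← T.sSup_unitClosedBall_eq_norm]
  refine csSup_le (hball.image _) ?_
  rintro - ⟨y, hy, rfl⟩
  exact hmax hy

namespace Matrix

variable {𝕜 : Type*} [RCLike 𝕜] {m n : Type*} [Fintype m] [Fintype n] [DecidableEq m]
  [DecidableEq n]

theorem one_le_l2_opNorm_of_det_one_sub_eq_zero {A : Matrix m m 𝕜} (h : (1 - A).det = 0) :
    1 ≤ ‖A‖ := by
  by_contra! hA
  exact ((isUnit_iff_isUnit_det _).1 (Units.oneSub A hA).isUnit).ne_zero h

theorem inv_l2_opNorm_le_of_det_one_sub_mul_eq_zero {M : Matrix m n 𝕜} {Δ : Matrix n m 𝕜}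
    (h : (1 - M * Δ).det = 0) : ‖M‖⁻¹ ≤ ‖Δ‖ := by
  have h1 : 1 ≤ ‖M‖ * ‖Δ‖ :=
    (one_le_l2_opNorm_of_det_one_sub_eq_zero h).trans (l2_opNorm_mul M Δ)
  have hM : 0 < ‖M‖ := pos_of_mul_pos_left (zero_lt_one.trans_le h1) (norm_nonneg Δ)
  exact (inv_le_iff_one_le_mul₀' hM).2 h1

theorem det_one_sub_eq_zero_of_mulVec_eq_self {A : Matrix m m 𝕜} {v : m → 𝕜} (hv : v ≠ 0)
    (h : A *ᵥ v = v) : (1 - A).det = 0 :=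
  exists_mulVec_eq_zero_iff.1 ⟨v, hv, by rw [sub_mulVec, one_mulVec, h, sub_self]⟩

theorem exists_l2_opNorm_le_inv_and_det_one_sub_mul_eq_zero {M : Matrix m n 𝕜} (hM : M ≠ 0) :
    ∃ Δ : Matrix n m 𝕜, ‖Δ‖ ≤ ‖M‖⁻¹ ∧ (1 - M * Δ).det = 0 := by
  let T : EuclideanSpace 𝕜 n →L[𝕜] EuclideanSpace 𝕜 m :=
    toEuclideanLin.trans LinearMap.toContinuousLinearMap M
  obtain ⟨x, hx, hTx⟩ := T.exists_norm_le_one_and_norm_apply_eq_opNorm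
  replace hTx : ‖T x‖ = ‖M‖ := hTx
  have hMpos : 0 < ‖M‖ := norm_pos_iff.2 hM
  let S : EuclideanSpace 𝕜 m →L[𝕜] EuclideanSpace 𝕜 n := ((‖M‖ : 𝕜) ^ 2)⁻¹ • rankOne 𝕜 x (T x)
  have hS : S (T x) = x := by
    simp only [S, _root_.smul_apply, rankOne_apply, inner_self_eq_norm_sq_to_K, hTx, smul_smul]
    rw [inv_mul_cancel₀ (by exact_mod_cast (pow_pos hMpos 2).ne'), one_smul]
  let e : Matrix n m 𝕜 ≃ₗ[𝕜] (EuclideanSpace 𝕜 m →L[𝕜] EuclideanSpace 𝕜 n) :=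
    toEuclideanLin.trans LinearMap.toContinuousLinearMap
  let Δ : Matrix n m 𝕜 := e.symm S
  have hΔ : ‖Δ‖ = ‖S‖ := by
    rw [l2_opNorm_def]
    exact congrArg norm (e.apply_symm_apply S)
  have hΔS : Δ *ᵥ ofLp (T x) = ofLp (S (T x)) :=
    congrArg (fun f => ofLp (f (T x))) (e.apply_symm_apply S)
  refine ⟨Δ, ?_, det_one_sub_eq_zero_of_mulVec_eq_self (v := ofLp (T x)) ?_ ?_⟩
  · calc ‖Δ‖ = ‖x‖ / ‖M‖ := by
          rw [hΔ, norm_smul, norm_rankOne, hTx, norm_inv, norm_pow, RCLike.norm_ofReal,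
            abs_of_pos hMpos]
          field_simp
      _ ≤ ‖M‖⁻¹ := by
          rw [div_eq_mul_inv]
          exact mul_le_of_le_one_left (inv_nonneg.2 hMpos.le) hx
  · rw [Ne, ofLp_eq_zero, ← norm_eq_zero, hTx]
    exact hMpos.ne'
  · rw [← mulVec_mulVec, hΔS, hS]
    rfl

end Matrix

/-- Destabilizing-feedback characterization of the L2 operator norm of a matrix:
for `M ≠ 0`, `inf {‖Δ‖ : det(I − MΔ) = 0} = ‖M‖⁻¹`, and the infimum is attained. -/
theorem destabilizing_feedback_characterization
    {p q : ℕ} (M : Matrix (Fin p) (Fin q) ℂ) (hM : M ≠ 0) :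
    sInf {x : ℝ | ∃ Δ : Matrix (Fin q) (Fin p) ℂ,
        ‖Δ‖ = x ∧ ((1 : Matrix (Fin p) (Fin p) ℂ) - M * Δ).det = 0} = ‖M‖⁻¹ ∧
    ∃ Δ : Matrix (Fin q) (Fin p) ℂ,
        ‖Δ‖ = ‖M‖⁻¹ ∧ ((1 : Matrix (Fin p) (Fin p) ℂ) - M * Δ).det = 0 := by
  obtain ⟨Δ₀, hle, hdet₀⟩ := exists_l2_opNorm_le_inv_and_det_one_sub_mul_eq_zero hM
  have hΔ₀ : ‖Δ₀‖ = ‖M‖⁻¹ := le_antisymm hle (inv_l2_opNorm_le_of_det_one_sub_mul_eq_zero hdet₀)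
  refine ⟨IsLeast.csInf_eq ⟨⟨Δ₀, hΔ₀, hdet₀⟩, ?_⟩, Δ₀, hΔ₀, hdet₀⟩
  rintro _ ⟨Δ, rfl, hdet⟩
  exact inv_l2_opNorm_le_of_det_one_sub_mul_eq_zero hdet
end

section
/- Let A and S be n×n complex matrices, Cp and Cu p×n complex matrices, and s, δ ∈ ℂ such that sI − A and sI − A − δS are invertible, and set Φ = sI − A. Let G be the (n+p)×2n block matrix G = [[Φ⁻¹S, Φ⁻¹S],[Cp, Cp − Cu]] and let Δ = [[δ·I_n, 0],[0, Δ_f]] for an arbitrary n×p complex matrix Δ_f. Then det(I_{n+p} − G·Δ) = det(I_n − δ·Φ⁻¹S) · det(I_p − T^u(s,δ)·Δ_f), where T^u(s,δ) := (Cp − Cu) + Cp(sI − A − δS)⁻¹δS. -/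
/-- Determinant factorization: with `G = [[Φ⁻¹S, Φ⁻¹S],[Cp, Cp − Cu]]` and the structured
feedback `Δ = block-diag(δI, Δ_f)`, one has
`det(I − GΔ) = det(I − δΦ⁻¹S) · det(I − T^u(s,δ)Δ_f)`. -/
theorem det_factorization_unperturbed
    {n p : ℕ}
    (A S : Matrix (Fin n) (Fin n) ℂ) (Cp Cu : Matrix (Fin p) (Fin n) ℂ)
    (s δ : ℂ)
    (h1 : IsUnit (s • (1 : Matrix (Fin n) (Fin n) ℂ) - A))
    (h2 : IsUnit (s • (1 : Matrix (Fin n) (Fin n) ℂ) - A - δ • S))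
    (Δf : Matrix (Fin n) (Fin p) ℂ) :
    ((1 : Matrix (Fin n ⊕ Fin p) (Fin n ⊕ Fin p) ℂ)
        - Matrix.fromBlocks
            ((s • (1 : Matrix (Fin n) (Fin n) ℂ) - A)⁻¹ * S)
            ((s • (1 : Matrix (Fin n) (Fin n) ℂ) - A)⁻¹ * S)
            Cp (Cp - Cu)
          * Matrix.fromBlocks (δ • (1 : Matrix (Fin n) (Fin n) ℂ)) 0 0 Δf).det
      = ((1 : Matrix (Fin n) (Fin n) ℂ)
            - δ • ((s • (1 : Matrix (Fin n) (Fin n) ℂ) - A)⁻¹ * S)).det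
        * ((1 : Matrix (Fin p) (Fin p) ℂ)
            - ((Cp - Cu) + Cp * (s • (1 : Matrix (Fin n) (Fin n) ℂ) - A - δ • S)⁻¹ * (δ • S))
              * Δf).det := by
  set Φ : Matrix (Fin n) (Fin n) ℂ := s • (1 : Matrix (Fin n) (Fin n) ℂ) - A with hΦ
  set M : Matrix (Fin n) (Fin n) ℂ := 1 - δ • (Φ⁻¹ * S) with hMdef
  have hΦinv : Φ * Φ⁻¹ = 1 := Matrix.mul_nonsing_inv _ (Matrix.isUnit_iff_isUnit_det Φ |>.mp h1)
  have hΦM : Φ * M = Φ - δ • S := by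
    rw [hMdef, Matrix.mul_sub, mul_one, Matrix.mul_smul, ← Matrix.mul_assoc, hΦinv, Matrix.one_mul]
  have hdet : IsUnit (Φ.det * M.det) := by
    rw [← Matrix.det_mul, hΦM]; exact (Matrix.isUnit_iff_isUnit_det _).mp h2
  have hMunit : IsUnit M :=
    (Matrix.isUnit_iff_isUnit_det _).mpr (isUnit_of_mul_isUnit_right hdet)
  have hMinv : M⁻¹ * Φ⁻¹ = (Φ - δ • S)⁻¹ := by
    rw [← hΦM, Matrix.mul_inv_rev]
  -- compute the block product
  have hprod :
      Matrix.fromBlocks (Φ⁻¹ * S) (Φ⁻¹ * S) Cp (Cp - Cu)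
          * Matrix.fromBlocks (δ • (1 : Matrix (Fin n) (Fin n) ℂ)) 0 0 Δf
        = Matrix.fromBlocks (δ • (Φ⁻¹ * S)) (Φ⁻¹ * S * Δf) (δ • Cp) ((Cp - Cu) * Δf) := by
    rw [Matrix.fromBlocks_multiply]
    simp [Matrix.mul_smul]
  rw [hprod]
  have hone : (1 : Matrix (Fin n ⊕ Fin p) (Fin n ⊕ Fin p) ℂ) =
      Matrix.fromBlocks 1 0 0 1 := (Matrix.fromBlocks_one).symm
  have hsub : (Matrix.fromBlocks 1 0 0 1
        - Matrix.fromBlocks (δ • (Φ⁻¹ * S)) (Φ⁻¹ * S * Δf) (δ • Cp) ((Cp - Cu) * Δf))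
      = Matrix.fromBlocks (M) (0 - Φ⁻¹ * S * Δf) (0 - δ • Cp)
          (1 - (Cp - Cu) * Δf) := by
    rw [hMdef, sub_eq_add_neg, Matrix.fromBlocks_neg, Matrix.fromBlocks_add]
    congr 1
  haveI := hMunit.invertible
  rw [hone, hsub, Matrix.det_fromBlocks₁₁, Matrix.invOf_eq_nonsing_inv]
  congr 1
  have key : (0 - δ • Cp) * M⁻¹ * (0 - Φ⁻¹ * S * Δf)
      = δ • (Cp * (Φ - δ • S)⁻¹ * S * Δf) := by
    rw [zero_sub, zero_sub, Matrix.neg_mul, Matrix.neg_mul, Matrix.mul_neg, neg_neg,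
      Matrix.smul_mul, Matrix.smul_mul, ← hMinv]
    simp [Matrix.mul_assoc]
  rw [key]
  have hT : ((Cp - Cu) + Cp * (Φ - δ • S)⁻¹ * (δ • S)) * Δf
      = (Cp - Cu) * Δf + δ • (Cp * (Φ - δ • S)⁻¹ * S * Δf) := by
    simp [Matrix.add_mul, Matrix.mul_smul, Matrix.smul_mul, Matrix.mul_assoc]
  rw [hT, sub_add_eq_sub_sub]
end

section
/- (Theorem IIIA.) Let A and S be n×n complex matrices, Cp and Cu p×n complex matrices, and s ∈ ℂ with Φ := sI − A invertible. Let G = [[Φ⁻¹S, Φ⁻¹S],[Cp, Cp − Cu]] and define m := inf{ max(|δ'|, ‖Δ_f‖) : δ' ∈ ℝ, Δ_f an n×p complex matrix, det(I_{n+p} − G·[[δ'·I_n, 0],[0, Δ_f]]) = 0 } (so that μ_D(G) = 1/m). Assume m > 0 and the infimum set is nonempty. Then for every δ ∈ ℝ with |δ| < m, the matrix sI − A − δS is invertible and ‖T^u(s,δ)‖ ≤ 1/m, where T^u(s,δ) := (Cp − Cu) + Cp(sI − A − δS)⁻¹δS and ‖·‖ is the L2 operator norm. -/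
/-!
Schur complement on the block `1 - δ Φ⁻¹ S` gives
`det (1 - G · diag(δ I, Δ)) = det (1 - δ Φ⁻¹ S) · det (1 - T^u Δ)`.
At `Δ = 0` this shows that `1 - δ Φ⁻¹ S`, hence `sI - A - δS = Φ (1 - δ Φ⁻¹ S)`, is invertible
when `|δ| < m`. If `‖T^u‖ > 1/m`, choose `x` with `‖T^u x‖ > ‖x‖ / m`; the rank-one
`Δ = x (T^u x)ᴴ / ‖T^u x‖²` has norm `< m` and kills `T^u x` under `1 - T^u Δ`, so `(δ, Δ)` lies in
the infimum set below `m`.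
-/

open scoped Matrix.Norms.L2Operator

namespace Matrix

section BlockDeterminant

variable {R : Type*} [CommRing R] {m n : Type*} [Fintype m] [DecidableEq m] [DecidableEq n]

lemma one_sub_fromBlocks_mul_fromBlocks_smul_one (M : Matrix m m R) (C D : Matrix n m R) (d : R)
    (Δ : Matrix m n R) :
    (1 : Matrix (m ⊕ n) (m ⊕ n) R) - fromBlocks M M C D * fromBlocks (d • 1) 0 0 Δ =
      fromBlocks (1 - d • M) (-(M * Δ)) (-(d • C)) (1 - D * Δ) := by
  -- this heterogeneous product elaborates through `CStarMatrix`'s `HMul` instance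
  erw [fromBlocks_multiply]
  rw [← fromBlocks_one, sub_eq_add_neg, fromBlocks_neg, fromBlocks_add]
  simp [sub_eq_add_neg]

lemma det_one_sub_fromBlocks_mul_fromBlocks_smul_one_zero [Fintype n] (M : Matrix m m R)
    (C D : Matrix n m R) (d : R) :
    ((1 : Matrix (m ⊕ n) (m ⊕ n) R) - fromBlocks M M C D * fromBlocks (d • 1) 0 0 0).det =
      (1 - d • M).det := by
  rw [one_sub_fromBlocks_mul_fromBlocks_smul_one, Matrix.mul_zero, neg_zero,
    det_fromBlocks_zero₁₂, Matrix.mul_zero, sub_zero, det_one, mul_one]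

lemma det_one_sub_fromBlocks_mul_fromBlocks_smul_one [Fintype n] {M : Matrix m m R}
    (C D : Matrix n m R) {d : R} (hM : IsUnit (1 - d • M)) (Δ : Matrix m n R) :
    ((1 : Matrix (m ⊕ n) (m ⊕ n) R) - fromBlocks M M C D * fromBlocks (d • 1) 0 0 Δ).det =
      (1 - d • M).det * (1 - (D + d • C * (1 - d • M)⁻¹ * M) * Δ).det := by
  have := (1 - d • M).invertibleOfIsUnitDet ((isUnit_iff_isUnit_det _).mp hM)
  rw [one_sub_fromBlocks_mul_fromBlocks_smul_one, det_fromBlocks₁₁, invOf_eq_nonsing_inv]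
  congr 2
  simp only [Matrix.add_mul, Matrix.neg_mul, Matrix.mul_neg, neg_neg, Matrix.smul_mul,
    Matrix.mul_assoc]
  abel

end BlockDeterminant

section Resolvent

variable {R : Type*} [CommRing R] {n p : Type*} [Fintype n] [DecidableEq n]

lemma sub_smul_eq_mul_one_sub_smul_inv_mul {Φ : Matrix n n R} (hΦ : IsUnit Φ) (S : Matrix n n R)
    (d : R) : Φ - d • S = Φ * (1 - d • (Φ⁻¹ * S)) := by
  rw [Matrix.mul_sub, Matrix.mul_one, Matrix.mul_smul, ← Matrix.mul_assoc,
    mul_nonsing_inv _ ((isUnit_iff_isUnit_det _).mp hΦ), Matrix.one_mul]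

lemma mul_sub_smul_inv_mul_smul {Φ : Matrix n n R} (hΦ : IsUnit Φ) (S : Matrix n n R) (d : R)
    (C : Matrix p n R) :
    C * (Φ - d • S)⁻¹ * (d • S) = d • C * (1 - d • (Φ⁻¹ * S))⁻¹ * (Φ⁻¹ * S) := by
  rw [sub_smul_eq_mul_one_sub_smul_inv_mul hΦ, mul_inv_rev]
  simp only [Matrix.mul_smul, Matrix.smul_mul, Matrix.mul_assoc]

end Resolvent

variable {𝕜 : Type*} [RCLike 𝕜] {m n : Type*} [Fintype m] [Fintype n] [DecidableEq n]

lemma l2_opNorm_vecMulVec_star (v : EuclideanSpace 𝕜 m) (w : EuclideanSpace 𝕜 n) :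
    ‖vecMulVec v.ofLp (star w.ofLp)‖ = ‖v‖ * ‖w‖ := by
  rw [l2_opNorm_def, ← InnerProductSpace.norm_rankOne v w (𝕜 := 𝕜)]
  congr 1
  ext z i
  simp [toEuclideanLin, vecMulVec_mulVec, dotProduct, EuclideanSpace.inner_eq_star_dotProduct,
    mul_comm]

lemma exists_det_one_sub_mul_eq_zero_of_lt_l2_opNorm [DecidableEq m] (T : Matrix m n 𝕜) {r : ℝ}
    (hr : 0 < r) (hrT : r < ‖T‖) :
    ∃ Δ : Matrix n m 𝕜, ‖Δ‖ < r⁻¹ ∧ (1 - T * Δ).det = 0 := by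
  obtain ⟨x, hx⟩ := ContinuousLinearMap.exists_mul_lt_of_lt_opNorm _ hr.le hrT
  set y : EuclideanSpace 𝕜 m := WithLp.toLp 2 (T *ᵥ x.ofLp)
  change r * ‖x‖ < ‖y‖ at hx
  have hy0 : 0 < ‖y‖ := (mul_nonneg hr.le (norm_nonneg x)).trans_lt hx
  refine ⟨((‖y‖ : 𝕜) ^ 2)⁻¹ • vecMulVec x.ofLp (star y.ofLp), ?_, ?_⟩
  · rw [norm_smul, l2_opNorm_vecMulVec_star, norm_inv, norm_pow, RCLike.norm_ofReal,
      abs_of_pos hy0]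
    calc (‖y‖ ^ 2)⁻¹ * (‖x‖ * ‖y‖) = ‖x‖ / ‖y‖ := by field_simp
      _ < r⁻¹ := by rw [div_lt_iff₀ hy0]; exact (lt_inv_mul_iff₀ hr).2 hx
  · rw [← exists_mulVec_eq_zero_iff]
    refine ⟨y.ofLp, fun h => hy0.ne' (by simp [← WithLp.ofLp_eq_zero, h]), ?_⟩
    have hdot : star y.ofLp ⬝ᵥ y.ofLp = (‖y‖ : 𝕜) ^ 2 := by
      rw [dotProduct_comm, ← EuclideanSpace.inner_eq_star_dotProduct, inner_self_eq_norm_sq_to_K]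
    have hy2 : (‖y‖ : 𝕜) ^ 2 ≠ 0 := by exact_mod_cast (pow_pos hy0 2).ne'
    rw [sub_mulVec, one_mulVec, ← mulVec_mulVec, smul_mulVec, vecMulVec_mulVec, hdot,
      op_smul_eq_smul, smul_smul, inv_mul_cancel₀ hy2, one_smul]
    exact sub_self _

end Matrix

open Matrix

theorem thm_IIIA_unperturbed_robust_performance_general
    {n p : ℕ}
    (A S : Matrix (Fin n) (Fin n) ℂ) (Cp Cu : Matrix (Fin p) (Fin n) ℂ) (s : ℂ)
    (hΦ : IsUnit (s • (1 : Matrix (Fin n) (Fin n) ℂ) - A))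
    (G : Matrix (Fin n ⊕ Fin p) (Fin n ⊕ Fin n) ℂ)
    (hG : G = Matrix.fromBlocks
        ((s • (1 : Matrix (Fin n) (Fin n) ℂ) - A)⁻¹ * S)
        ((s • (1 : Matrix (Fin n) (Fin n) ℂ) - A)⁻¹ * S)
        Cp (Cp - Cu))
    (P : Set ℝ)
    (hP : P = {x : ℝ | ∃ (δ' : ℝ) (Δf : Matrix (Fin n) (Fin p) ℂ),
        x = max |δ'| ‖Δf‖ ∧
        ((1 : Matrix (Fin n ⊕ Fin p) (Fin n ⊕ Fin p) ℂ)
          - G * Matrix.fromBlocks ((δ' : ℂ) • (1 : Matrix (Fin n) (Fin n) ℂ)) 0 0 Δf).det = 0}) :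
    ∀ δ : ℝ, |δ| < sInf P →
      IsUnit (s • (1 : Matrix (Fin n) (Fin n) ℂ) - A - (δ : ℂ) • S) ∧
      ‖(Cp - Cu) + Cp * (s • (1 : Matrix (Fin n) (Fin n) ℂ) - A - (δ : ℂ) • S)⁻¹
          * ((δ : ℂ) • S)‖ ≤ 1 / sInf P := by
  intro δ hδ
  subst hG
  have hm : 0 < sInf P := (abs_nonneg δ).trans_lt hδ
  have hbdd : BddBelow P := ⟨0, by
    rw [hP]
    rintro _ ⟨δ', Δf, rfl, -⟩
    exact (abs_nonneg δ').trans (le_max_left _ _)⟩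
  have hinf_le : ∀ Δf : Matrix (Fin n) (Fin p) ℂ,
      ((1 : Matrix (Fin n ⊕ Fin p) (Fin n ⊕ Fin p) ℂ) -
        fromBlocks ((s • 1 - A)⁻¹ * S) ((s • 1 - A)⁻¹ * S) Cp (Cp - Cu) *
          fromBlocks ((δ : ℂ) • 1) 0 0 Δf).det = 0 → sInf P ≤ max |δ| ‖Δf‖ := fun Δf h =>
    csInf_le hbdd (by rw [hP]; exact ⟨δ, Δf, rfl, h⟩)
  have hunit : IsUnit (1 - (δ : ℂ) • ((s • 1 - A)⁻¹ * S)) := by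
    rw [isUnit_iff_isUnit_det, isUnit_iff_ne_zero]
    intro h0
    have hle := hinf_le 0 (by rw [det_one_sub_fromBlocks_mul_fromBlocks_smul_one_zero, h0])
    rw [norm_zero, max_eq_left (abs_nonneg δ)] at hle
    exact hle.not_gt hδ
  refine ⟨sub_smul_eq_mul_one_sub_smul_inv_mul hΦ S (δ : ℂ) ▸ hΦ.mul hunit, ?_⟩
  rw [mul_sub_smul_inv_mul_smul hΦ]
  by_contra! hT
  obtain ⟨Δf, hΔf, hdet⟩ :=
    exists_det_one_sub_mul_eq_zero_of_lt_l2_opNorm _ (one_div_pos.2 hm) hT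
  rw [one_div, inv_inv] at hΔf
  have hle := hinf_le Δf (by
    rw [det_one_sub_fromBlocks_mul_fromBlocks_smul_one _ _ hunit, hdet, mul_zero])
  exact hle.not_gt (max_lt hδ hΔf)

/-- Theorem IIIA: robust performance bound in the unperturbed formulation.
With `G = [[Φ⁻¹S, Φ⁻¹S],[Cp, Cp − Cu]]` and
`m = inf { max(|δ'|, ‖Δ_f‖) : det(I − G·block-diag(δ'I, Δ_f)) = 0 }` (so `μ_D(G) = 1/m`),
for every real `δ` with `|δ| < m`, `sI − A − δS` is invertible and `‖T^u(s,δ)‖ ≤ 1/m`. -/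
theorem thm_IIIA_unperturbed_robust_performance
    {n p : ℕ}
    (A S : Matrix (Fin n) (Fin n) ℂ) (Cp Cu : Matrix (Fin p) (Fin n) ℂ) (s : ℂ)
    (hΦ : IsUnit (s • (1 : Matrix (Fin n) (Fin n) ℂ) - A))
    (G : Matrix (Fin n ⊕ Fin p) (Fin n ⊕ Fin n) ℂ)
    (hG : G = Matrix.fromBlocks
        ((s • (1 : Matrix (Fin n) (Fin n) ℂ) - A)⁻¹ * S)
        ((s • (1 : Matrix (Fin n) (Fin n) ℂ) - A)⁻¹ * S)
        Cp (Cp - Cu))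
    (P : Set ℝ)
    (hP : P = {x : ℝ | ∃ (δ' : ℝ) (Δf : Matrix (Fin n) (Fin p) ℂ),
        x = max |δ'| ‖Δf‖ ∧
        ((1 : Matrix (Fin n ⊕ Fin p) (Fin n ⊕ Fin p) ℂ)
          - G * Matrix.fromBlocks ((δ' : ℂ) • (1 : Matrix (Fin n) (Fin n) ℂ)) 0 0 Δf).det = 0})
    (hne : P.Nonempty) (hm : 0 < sInf P) :
    ∀ δ : ℝ, |δ| < sInf P →
      IsUnit (s • (1 : Matrix (Fin n) (Fin n) ℂ) - A - (δ : ℂ) • S) ∧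
      ‖(Cp - Cu) + Cp * (s • (1 : Matrix (Fin n) (Fin n) ℂ) - A - (δ : ℂ) • S)⁻¹
          * ((δ : ℂ) • S)‖ ≤ 1 / sInf P :=
  thm_IIIA_unperturbed_robust_performance_general A S Cp Cu s hΦ G hG P hP
end

section
/- (Theorem IIID.) Let A, S, Sc' be matrices over ℂ with A, S of size n×n and Cu, S_c of size p×n; let s ∈ ℂ with Φ := sI − A invertible, and set X := Φ⁻¹S. Let G be the (5n+p)×7n block matrix with block rows (v1,...,v5, e) and block columns (η1,...,η5, z0, w_u) given by: row v1 = [X, 0, 0, 0, 0 | 0, X]; row v2 = [0, X, 0, 0, 0 | Φ⁻¹, 0]; row v3 = [I_n, 0, 0, 0, 0 | 0, 0]; row v4 = [0, 0, 0, 0, 0 | 0, I_n]; row v5 = [0, X, 0, 0, 0 | Φ⁻¹, 0]; row e = [Cu, Cu·X, S_c, S_c, S_c | Cu·Φ⁻¹, 0]. Define m := inf{ max(|δ'|, |δ_c'|, ‖Δ_f‖) : δ', δ_c' ∈ ℝ, Δ_f a 2n×p complex matrix, det(I_{5n+p} − G·block-diag(δ'I_n, δ'I_n, δ_c'I_n,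 δ_c'I_n, δ_c'I_n, Δ_f)) = 0 }. Assume m > 0 and the infimum set is nonempty. Then for all δ, δ_c ∈ ℝ with max(|δ|, |δ_c|) < m, the matrix sI − A − δS is invertible and, with Cp := Cu + δ_c·S_c, the p×2n transfer matrix T := [Cp·(sI − A − δS)⁻¹ , Cp·(sI − A − δS)⁻¹·δS + δ_c·S_c] from (z(0), ŵ_u) to ê satisfies ‖T‖ ≤ 1/m. -/
/-!
Closing the loop `G` with `diag(D, Δ_f)`, `D = diag(δI, δI, δ_cI, δ_cI, δ_cI)`, the Schur complement
gives `det(I - G diag(D, Δ_f)) = det(I - δX)² · det(I - T Δ_f)`, where `T`, the upper linear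
fractional transformation `G_ew + G_eη D (I - G_vη D)⁻¹ G_vw`, is exactly the transfer matrix of the
theorem. With `Δ_f = 0` this shows that `I - δX`, hence `sI - A - δS = Φ (I - δX)`, is invertible when
`max(|δ|, |δ_c|) < m`. If `‖T‖ > 1/m`, pick `‖x‖ < 1` with `y = T x` of norm `> 1/m`: the rank-one
`Δ_f = x y* / ‖y‖²` has norm `< m` and `T Δ_f y = y`, contradicting the definition of `m`.
-/

open scoped Matrix.Norms.L2Operator

namespace Matrix

section Blocks

variable {R : Type*}

theorem fromCols_add [Add R] {m n₁ n₂ : Type*} (A₁ B₁ : Matrix m n₁ R) (A₂ B₂ : Matrix m n₂ R) :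
    fromCols A₁ A₂ + fromCols B₁ B₂ = fromCols (A₁ + B₁) (A₂ + B₂) := by
  ext i (j | j) <;> rfl

variable [CommRing R] {l m n o : Type*} [Fintype m] [Fintype n] [DecidableEq l] [DecidableEq o]

theorem one_sub_fromBlocks_mul_fromBlocks_zero (G₁₁ : Matrix l m R) (G₁₂ : Matrix l n R)
    (G₂₁ : Matrix o m R) (G₂₂ : Matrix o n R) (D : Matrix m l R) (Δ : Matrix n o R) :
    1 - fromBlocks G₁₁ G₁₂ G₂₁ G₂₂ * fromBlocks D 0 0 Δ =
      fromBlocks (1 - G₁₁ * D) (-(G₁₂ * Δ)) (-(G₂₁ * D)) (1 - G₂₂ * Δ) := by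
  rw [fromBlocks_multiply, ← fromBlocks_one, sub_eq_add_neg, fromBlocks_neg, fromBlocks_add]
  simp [sub_eq_add_neg]

variable [Fintype l] [Fintype o]

theorem det_one_sub_fromBlocks_mul_fromBlocks_zero_zero (G₁₁ : Matrix l m R) (G₁₂ : Matrix l n R)
    (G₂₁ : Matrix o m R) (G₂₂ : Matrix o n R) (D : Matrix m l R) :
    (1 - fromBlocks G₁₁ G₁₂ G₂₁ G₂₂ * fromBlocks D 0 0 (0 : Matrix n o R)).det =
      (1 - G₁₁ * D).det := by
  simp [one_sub_fromBlocks_mul_fromBlocks_zero]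

/-- `K` stands for `(1 - G₁₁ D)⁻¹ G₁₂`, so `G₂₂ + G₂₁ D K` is the upper linear fractional
transformation of `G` by `D`. -/
theorem det_one_sub_fromBlocks_mul_fromBlocks_zero_of_mul_eq (G₁₁ : Matrix l m R)
    (G₁₂ : Matrix l n R) (G₂₁ : Matrix o m R) (G₂₂ : Matrix o n R) (D : Matrix m l R)
    (Δ : Matrix n o R) {K : Matrix l n R} (hN : IsUnit (1 - G₁₁ * D))
    (hK : (1 - G₁₁ * D) * K = G₁₂) :
    (1 - fromBlocks G₁₁ G₁₂ G₂₁ G₂₂ * fromBlocks D 0 0 Δ).det =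
      (1 - G₁₁ * D).det * (1 - (G₂₂ + G₂₁ * D * K) * Δ).det := by
  let := hN.invertible
  have hK' : ⅟(1 - G₁₁ * D) * G₁₂ = K := by rw [← hK, Matrix.invOf_mul_cancel_left]
  rw [one_sub_fromBlocks_mul_fromBlocks_zero, det_fromBlocks₁₁, ← hK']
  simp only [Matrix.neg_mul, Matrix.mul_neg, neg_neg, Matrix.mul_assoc, Matrix.add_mul]
  abel_nf

end Blocks

section SmallGain

variable {𝕜 : Type*} [RCLike 𝕜] {q r : Type*} [Fintype q] [Fintype r] [DecidableEq q]
  [DecidableEq r]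

theorem exists_det_one_sub_mul_eq_zero_of_inv_lt_norm (T : Matrix q r 𝕜) {m : ℝ} (hm : 0 < m)
    (hT : m⁻¹ < ‖T‖) : ∃ Δ : Matrix r q 𝕜, ‖Δ‖ < m ∧ (1 - T * Δ).det = 0 := by
  set LT := (toEuclideanLin (𝕜 := 𝕜) (m := q) (n := r)).trans LinearMap.toContinuousLinearMap
  set LΔ := (toEuclideanLin (𝕜 := 𝕜) (m := r) (n := q)).trans LinearMap.toContinuousLinearMap
  obtain ⟨x, hx, hy⟩ := (LT T).exists_lt_apply_of_lt_opNorm hT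
  set y := LT T x
  have hy0 : 0 < ‖y‖ := (inv_pos.2 hm).trans hy
  set Δ := LΔ.symm (((‖y‖ : 𝕜) ^ 2)⁻¹ • InnerProductSpace.rankOne 𝕜 x y)
  have hΔy : Δ *ᵥ WithLp.ofLp y = WithLp.ofLp x := by
    change WithLp.ofLp (LΔ Δ y) = _
    simp [Δ, inner_self_eq_norm_sq_to_K, hy0.ne']
  refine ⟨Δ, ?_, ?_⟩
  · change ‖LΔ Δ‖ < m
    simp only [Δ, LinearEquiv.apply_symm_apply, norm_smul, InnerProductSpace.norm_rankOne,
      norm_inv, norm_pow, RCLike.norm_ofReal, abs_norm]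
    have hmy : 1 < m * ‖y‖ := by simpa [hm.ne'] using mul_lt_mul_of_pos_left hy hm
    calc (‖y‖ ^ 2)⁻¹ * (‖x‖ * ‖y‖) = ‖x‖ / ‖y‖ := by field_simp
      _ < m := by rw [div_lt_iff₀ hy0]; linarith
  · rw [← exists_mulVec_eq_zero_iff]
    refine ⟨WithLp.ofLp y, by simpa using hy0.ne', ?_⟩
    rw [sub_mulVec, one_mulVec, ← mulVec_mulVec, hΔy]
    exact sub_self _

theorem norm_le_one_div_of_forall_det_one_sub_mul_ne_zero (T : Matrix q r 𝕜) {m : ℝ}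
    (hm : 0 < m) (h : ∀ Δ : Matrix r q 𝕜, ‖Δ‖ < m → (1 - T * Δ).det ≠ 0) : ‖T‖ ≤ 1 / m := by
  by_contra! hT
  obtain ⟨Δ, hΔ, hdet⟩ := exists_det_one_sub_mul_eq_zero_of_inv_lt_norm T hm (by rwa [← one_div])
  exact h Δ hΔ hdet

end SmallGain

end Matrix

namespace UncertainLoop

open Matrix

variable {ι κ R : Type*} [Fintype ι] [DecidableEq ι] [CommRing R]

abbrev FiveBlocks (ι : Type*) := ι ⊕ (ι ⊕ (ι ⊕ (ι ⊕ ι)))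

/- The four blocks of `G` (rows `v`/`e`, columns `η`/`(z0, w_u)`), in terms of `X = Φ⁻¹S`
and `F = Φ⁻¹`. -/

def gVη (X : Matrix ι ι R) : Matrix (FiveBlocks ι) (FiveBlocks ι) R :=
  fromRows (fromCols X 0)
    (fromRows (fromCols 0 (fromCols X 0))
      (fromRows (fromCols 1 0)
        (fromRows 0 (fromCols 0 (fromCols X 0)))))

def gVw (X F : Matrix ι ι R) : Matrix (FiveBlocks ι) (ι ⊕ ι) R :=
  fromRows (fromCols 0 X)
    (fromRows (fromCols F 0)
      (fromRows 0 (fromRows (fromCols 0 1) (fromCols F 0))))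

def gEη (X : Matrix ι ι R) (Cu Sc : Matrix κ ι R) : Matrix κ (FiveBlocks ι) R :=
  fromCols Cu (fromCols (Cu * X) (fromCols Sc (fromCols Sc Sc)))

def gEw (F : Matrix ι ι R) (Cu : Matrix κ ι R) : Matrix κ (ι ⊕ ι) R :=
  fromCols (Cu * F) 0

variable (ι) in
def dη (a b : R) : Matrix (FiveBlocks ι) (FiveBlocks ι) R :=
  fromBlocks (a • 1) 0 0
    (fromBlocks (a • 1) 0 0 (fromBlocks (b • 1) 0 0 (fromBlocks (b • 1) 0 0 (b • 1))))

/-- `(1 - gVη D)⁻¹ gVw`, the response of the loop signals `v` to `(z0, w_u)`, written with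
`Ψ = (Φ - aS)⁻¹`. -/
def kVw (S Ψ : Matrix ι ι R) (a : R) : Matrix (FiveBlocks ι) (ι ⊕ ι) R :=
  fromRows (fromCols 0 (Ψ * S))
    (fromRows (fromCols Ψ 0)
      (fromRows (fromCols 0 (a • (Ψ * S))) (fromRows (fromCols 0 1) (fromCols Ψ 0))))

theorem one_sub_gVη_mul_dη (X : Matrix ι ι R) (a b : R) :
    1 - gVη X * dη ι a b =
      fromBlocks (1 - a • X) 0 (fromRows 0 (fromRows (-(a • 1)) 0))
        (fromBlocks (1 - a • X) 0 (fromRows 0 (fromRows 0 (-(a • X)))) 1) := by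
  simp only [gVη, dη, fromRows_mul, fromCols_mul_fromBlocks, Matrix.mul_zero, Matrix.zero_mul,
    add_zero, zero_add, Matrix.mul_smul, Matrix.mul_one]
  ext (i | i | i | i | i) (j | j | j | j | j) <;> simp [one_apply]

theorem det_one_sub_gVη_mul_dη (X : Matrix ι ι R) (a b : R) :
    (1 - gVη X * dη ι a b).det = (1 - a • X).det ^ 2 := by
  rw [one_sub_gVη_mul_dη, det_fromBlocks_zero₁₂, det_fromBlocks_zero₁₂, det_one, mul_one, sq]

theorem isUnit_one_sub_gVη_mul_dη {X : Matrix ι ι R} {a : R} (b : R) (h : IsUnit (1 - a • X)) :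
    IsUnit (1 - gVη X * dη ι a b) := by
  rw [isUnit_iff_isUnit_det, det_one_sub_gVη_mul_dη]
  exact ((isUnit_iff_isUnit_det _).1 h).pow 2

theorem one_sub_gVη_mul_dη_mul_kVw {X F S Ψ : Matrix ι ι R} {a : R} (b : R) (hX : X = F * S)
    (hΨ : (1 - a • X) * Ψ = F) : (1 - gVη X * dη ι a b) * kVw S Ψ a = gVw X F := by
  have hΨS : (1 - a • X) * (Ψ * S) = X := by rw [← Matrix.mul_assoc, hΨ, hX]
  have hΨ' : Ψ - a • (X * Ψ) = F := by rw [← hΨ, Matrix.sub_mul, Matrix.one_mul, Matrix.smul_mul]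
  simp only [one_sub_gVη_mul_dη, kVw, gVw, fromBlocks_mul_fromRows, fromRows_mul, mul_fromCols,
    Matrix.mul_zero, Matrix.zero_mul, Matrix.one_mul, add_zero, hΨ, hΨS, Matrix.neg_mul,
    Matrix.smul_mul, ← hΨ']
  ext (i | i | i | i | i) (j | j) <;> simp [sub_eq_add_neg, add_comm]

theorem gEw_add_gEη_mul_dη_mul_kVw {X F S Ψ : Matrix ι ι R} {a : R} (b : R) (Cu Sc : Matrix κ ι R)
    (hΨ : (1 - a • X) * Ψ = F) :
    gEw F Cu + gEη X Cu Sc * dη ι a b * kVw S Ψ a =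
      fromCols ((Cu + b • Sc) * Ψ) ((Cu + b • Sc) * Ψ * (a • S) + b • Sc) := by
  have hΨ' : Ψ - a • (X * Ψ) = F := by rw [← hΨ, Matrix.sub_mul, Matrix.one_mul, Matrix.smul_mul]
  simp only [gEw, gEη, dη, kVw, fromCols_mul_fromBlocks, fromCols_mul_fromRows, mul_fromCols,
    Matrix.mul_zero, add_zero, zero_add, Matrix.mul_smul, Matrix.mul_one, fromCols_add, ← hΨ']
  rw [fromCols_ext_iff]
  constructor
  · simp only [Matrix.mul_sub, Matrix.mul_smul, Matrix.add_mul, Matrix.smul_mul, Matrix.mul_assoc]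
    abel
  · simp only [Matrix.add_mul, Matrix.smul_mul, Matrix.mul_assoc]
    module

theorem sub_smul_eq_mul_one_sub_smul {Φ S X : Matrix ι ι R} (hΦ : IsUnit Φ) (hX : X = Φ⁻¹ * S)
    (a : R) : Φ - a • S = Φ * (1 - a • X) := by
  rw [Matrix.mul_sub, Matrix.mul_one, Matrix.mul_smul, hX, ← Matrix.mul_assoc,
    mul_nonsing_inv _ ((isUnit_iff_isUnit_det _).1 hΦ), Matrix.one_mul]

theorem one_sub_smul_mul_inv_sub_smul {Φ S X : Matrix ι ι R} (hΦ : IsUnit Φ)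
    (hX : X = Φ⁻¹ * S) {a : R} (hW : IsUnit (1 - a • X)) : (1 - a • X) * (Φ - a • S)⁻¹ = Φ⁻¹ := by
  rw [sub_smul_eq_mul_one_sub_smul hΦ hX, Matrix.mul_inv_rev, ← Matrix.mul_assoc,
    mul_nonsing_inv _ ((isUnit_iff_isUnit_det _).1 hW), Matrix.one_mul]

end UncertainLoop

open UncertainLoop

theorem thm_IIID_unperturbed_with_initial_error_general
    {n p : ℕ}
    (A S : Matrix (Fin n) (Fin n) ℂ) (Cu Sc : Matrix (Fin p) (Fin n) ℂ) (s : ℂ)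
    (hΦ : IsUnit (s • (1 : Matrix (Fin n) (Fin n) ℂ) - A))
    (X : Matrix (Fin n) (Fin n) ℂ)
    (hX : X = (s • (1 : Matrix (Fin n) (Fin n) ℂ) - A)⁻¹ * S)
    (G : Matrix ((Fin n ⊕ (Fin n ⊕ (Fin n ⊕ (Fin n ⊕ Fin n)))) ⊕ Fin p)
                ((Fin n ⊕ (Fin n ⊕ (Fin n ⊕ (Fin n ⊕ Fin n)))) ⊕ (Fin n ⊕ Fin n)) ℂ)
    (hG : G = Matrix.fromBlocks
        -- v-rows × η-columns
        (Matrix.fromRows (Matrix.fromCols X 0)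
          (Matrix.fromRows (Matrix.fromCols 0 (Matrix.fromCols X 0))
            (Matrix.fromRows (Matrix.fromCols 1 0)
              (Matrix.fromRows 0 (Matrix.fromCols 0 (Matrix.fromCols X 0))))))
        -- v-rows × (z0, w_u)-columns
        (Matrix.fromRows (Matrix.fromCols 0 X)
          (Matrix.fromRows
            (Matrix.fromCols ((s • (1 : Matrix (Fin n) (Fin n) ℂ) - A)⁻¹) 0)
            (Matrix.fromRows 0
              (Matrix.fromRows (Matrix.fromCols 0 1)
                (Matrix.fromCols ((s • (1 : Matrix (Fin n) (Fin n) ℂ) - A)⁻¹) 0)))))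
        -- e-row × η-columns
        (Matrix.fromCols Cu
          (Matrix.fromCols (Cu * X) (Matrix.fromCols Sc (Matrix.fromCols Sc Sc))))
        -- e-row × (z0, w_u)-columns
        (Matrix.fromCols (Cu * (s • (1 : Matrix (Fin n) (Fin n) ℂ) - A)⁻¹) 0))
    (P : Set ℝ)
    (hP : P = {x : ℝ | ∃ (δ' δc' : ℝ)
        (Δf : Matrix (Fin n ⊕ Fin n) (Fin p) ℂ),
        x = max |δ'| (max |δc'| ‖Δf‖) ∧
        ((1 : Matrix ((Fin n ⊕ (Fin n ⊕ (Fin n ⊕ (Fin n ⊕ Fin n)))) ⊕ Fin p)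
                     ((Fin n ⊕ (Fin n ⊕ (Fin n ⊕ (Fin n ⊕ Fin n)))) ⊕ Fin p) ℂ)
          - G * Matrix.fromBlocks
              (Matrix.fromBlocks ((δ' : ℂ) • (1 : Matrix (Fin n) (Fin n) ℂ)) 0 0
                (Matrix.fromBlocks ((δ' : ℂ) • (1 : Matrix (Fin n) (Fin n) ℂ)) 0 0
                  (Matrix.fromBlocks ((δc' : ℂ) • (1 : Matrix (Fin n) (Fin n) ℂ)) 0 0
                    (Matrix.fromBlocks ((δc' : ℂ) • (1 : Matrix (Fin n) (Fin n) ℂ)) 0 0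
                      ((δc' : ℂ) • (1 : Matrix (Fin n) (Fin n) ℂ))))))
              0 0 Δf).det = 0})
    (hm : 0 < sInf P) :
    ∀ δ δc : ℝ, max |δ| |δc| < sInf P →
      IsUnit (s • (1 : Matrix (Fin n) (Fin n) ℂ) - A - (δ : ℂ) • S) ∧
      ‖Matrix.fromCols
          ((Cu + (δc : ℂ) • Sc) * (s • (1 : Matrix (Fin n) (Fin n) ℂ) - A - (δ : ℂ) • S)⁻¹)
          ((Cu + (δc : ℂ) • Sc) * (s • (1 : Matrix (Fin n) (Fin n) ℂ) - A - (δ : ℂ) • S)⁻¹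
              * ((δ : ℂ) • S) + (δc : ℂ) • Sc)‖ ≤ 1 / sInf P := by
  intro δ δc hδ
  set Φ := s • (1 : Matrix (Fin n) (Fin n) ℂ) - A
  replace hG : G = Matrix.fromBlocks (gVη X) (gVw X Φ⁻¹) (gEη X Cu Sc) (gEw Φ⁻¹ Cu) := hG
  subst hG
  have hmin : ∀ Δf : Matrix (Fin n ⊕ Fin n) (Fin p) ℂ,
      (1 - Matrix.fromBlocks (gVη X) (gVw X Φ⁻¹) (gEη X Cu Sc) (gEw Φ⁻¹ Cu) *
        Matrix.fromBlocks (dη (Fin n) (δ : ℂ) δc) 0 0 Δf).det = 0 →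
      sInf P ≤ max |δ| (max |δc| ‖Δf‖) := fun Δf h =>
    csInf_le (hP ▸ ⟨0, by rintro _ ⟨_, _, _, rfl, -⟩; positivity⟩) (hP ▸ ⟨δ, δc, Δf, rfl, h⟩)
  have hW : IsUnit (1 - (δ : ℂ) • X) := by
    rw [Matrix.isUnit_iff_isUnit_det, isUnit_iff_ne_zero]
    intro hdet
    have h := hmin 0 (by
      rw [Matrix.det_one_sub_fromBlocks_mul_fromBlocks_zero_zero, det_one_sub_gVη_mul_dη, hdet,
        zero_pow two_ne_zero])
    rw [norm_zero, max_eq_left (abs_nonneg δc)] at h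
    exact h.not_gt hδ
  have hΨ := one_sub_smul_mul_inv_sub_smul hΦ hX hW
  refine ⟨sub_smul_eq_mul_one_sub_smul hΦ hX (δ : ℂ) ▸ hΦ.mul hW, ?_⟩
  rw [← gEw_add_gEη_mul_dη_mul_kVw (δc : ℂ) Cu Sc hΨ]
  refine Matrix.norm_le_one_div_of_forall_det_one_sub_mul_ne_zero _ hm fun Δf hΔf hdet => ?_
  have h := hmin Δf (by
    rw [Matrix.det_one_sub_fromBlocks_mul_fromBlocks_zero_of_mul_eq _ _ _ _ _ _
      (isUnit_one_sub_gVη_mul_dη _ hW) (one_sub_gVη_mul_dη_mul_kVw (δc : ℂ) hX hΨ), hdet,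
      mul_zero])
  rw [max_lt_iff] at hδ
  exact h.not_gt (max_lt hδ.1 (max_lt hδ.2 hΔf))

/-- Theorem IIID: robust performance in the unperturbed formulation with initial state
error and uncertain output matrix `Cp = Cu + δ_c S_c`.  `G` is the block matrix with
block rows `(v1,…,v5,e)` and block columns `(η1,…,η5,z0,w_u)` of the paper, and
`m = inf { max(|δ'|,|δ_c'|,‖Δ_f‖) : det(I − G·block-diag(δ'I,δ'I,δ_c'I,δ_c'I,δ_c'I,Δ_f)) = 0 }`.
Then for `max(|δ|,|δ_c|) < m`, `sI − A − δS` is invertible and the transfer matrix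
`[Cp(sI − A − δS)⁻¹ , Cp(sI − A − δS)⁻¹δS + δ_c S_c]` has norm at most `1/m`. -/
theorem thm_IIID_unperturbed_with_initial_error
    {n p : ℕ}
    (A S : Matrix (Fin n) (Fin n) ℂ) (Cu Sc : Matrix (Fin p) (Fin n) ℂ) (s : ℂ)
    (hΦ : IsUnit (s • (1 : Matrix (Fin n) (Fin n) ℂ) - A))
    (X : Matrix (Fin n) (Fin n) ℂ)
    (hX : X = (s • (1 : Matrix (Fin n) (Fin n) ℂ) - A)⁻¹ * S)
    (G : Matrix ((Fin n ⊕ (Fin n ⊕ (Fin n ⊕ (Fin n ⊕ Fin n)))) ⊕ Fin p)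
                ((Fin n ⊕ (Fin n ⊕ (Fin n ⊕ (Fin n ⊕ Fin n)))) ⊕ (Fin n ⊕ Fin n)) ℂ)
    (hG : G = Matrix.fromBlocks
        -- v-rows × η-columns
        (Matrix.fromRows (Matrix.fromCols X 0)
          (Matrix.fromRows (Matrix.fromCols 0 (Matrix.fromCols X 0))
            (Matrix.fromRows (Matrix.fromCols 1 0)
              (Matrix.fromRows 0 (Matrix.fromCols 0 (Matrix.fromCols X 0))))))
        -- v-rows × (z0, w_u)-columns
        (Matrix.fromRows (Matrix.fromCols 0 X)
          (Matrix.fromRows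
            (Matrix.fromCols ((s • (1 : Matrix (Fin n) (Fin n) ℂ) - A)⁻¹) 0)
            (Matrix.fromRows 0
              (Matrix.fromRows (Matrix.fromCols 0 1)
                (Matrix.fromCols ((s • (1 : Matrix (Fin n) (Fin n) ℂ) - A)⁻¹) 0)))))
        -- e-row × η-columns
        (Matrix.fromCols Cu
          (Matrix.fromCols (Cu * X) (Matrix.fromCols Sc (Matrix.fromCols Sc Sc))))
        -- e-row × (z0, w_u)-columns
        (Matrix.fromCols (Cu * (s • (1 : Matrix (Fin n) (Fin n) ℂ) - A)⁻¹) 0))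
    (P : Set ℝ)
    (hP : P = {x : ℝ | ∃ (δ' δc' : ℝ)
        (Δf : Matrix (Fin n ⊕ Fin n) (Fin p) ℂ),
        x = max |δ'| (max |δc'| ‖Δf‖) ∧
        ((1 : Matrix ((Fin n ⊕ (Fin n ⊕ (Fin n ⊕ (Fin n ⊕ Fin n)))) ⊕ Fin p)
                     ((Fin n ⊕ (Fin n ⊕ (Fin n ⊕ (Fin n ⊕ Fin n)))) ⊕ Fin p) ℂ)
          - G * Matrix.fromBlocks
              (Matrix.fromBlocks ((δ' : ℂ) • (1 : Matrix (Fin n) (Fin n) ℂ)) 0 0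
                (Matrix.fromBlocks ((δ' : ℂ) • (1 : Matrix (Fin n) (Fin n) ℂ)) 0 0
                  (Matrix.fromBlocks ((δc' : ℂ) • (1 : Matrix (Fin n) (Fin n) ℂ)) 0 0
                    (Matrix.fromBlocks ((δc' : ℂ) • (1 : Matrix (Fin n) (Fin n) ℂ)) 0 0
                      ((δc' : ℂ) • (1 : Matrix (Fin n) (Fin n) ℂ))))))
              0 0 Δf).det = 0})
    (hne : P.Nonempty) (hm : 0 < sInf P) :
    ∀ δ δc : ℝ, max |δ| |δc| < sInf P →
      IsUnit (s • (1 : Matrix (Fin n) (Fin n) ℂ) - A - (δ : ℂ) • S) ∧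
      ‖Matrix.fromCols
          ((Cu + (δc : ℂ) • Sc) * (s • (1 : Matrix (Fin n) (Fin n) ℂ) - A - (δ : ℂ) • S)⁻¹)
          ((Cu + (δc : ℂ) • Sc) * (s • (1 : Matrix (Fin n) (Fin n) ℂ) - A - (δ : ℂ) • S)⁻¹
              * ((δ : ℂ) • S) + (δc : ℂ) • Sc)‖ ≤ 1 / sInf P :=
  thm_IIID_unperturbed_with_initial_error_general A S Cu Sc s hΦ X hX G hG P hP hm
end

section
/- (Theorem IVA.) Let A and S be n×n complex matrices, Cu and S_c p×n complex matrices, and s ∈ ℂ with Φ := sI − A invertible. Let G be the block matrix with block rows (v1, v2, e) and block columns (η1, η2, w_p) given by row v1 = [0, 0, I_n], row v2 = [0, 0, I_n], row e = [Cu·Φ⁻¹·S, S_c, 0], and define m := inf{ max(|δ'|, |δ_c'|, ‖Δ_f‖) : δ', δ_c' ∈ ℝ, Δ_f an n×p complex matrix, det(I_{2n+p} − G·block-diag(δ'I_n, δ_c'I_n, Δ_f)) = 0 }. Assume m > 0 and the infimum set is nonempty. Then for all δ, δ_c ∈ ℝ with max(|δ|, |δ_c|) < m, ‖Cu·Φ⁻¹·δS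 + δ_c·S_c‖ ≤ 1/m, where ‖·‖ is the L2 operator norm. -/
/-!
If `‖T‖ > 1/m` for `T = δ·CuΦ⁻¹S + δ_c·S_c`, then `Δ_f = Tᴴ / ‖T‖²` has norm `1/‖T‖ < m`, and
`I − TΔ_f` is singular because `‖T‖²` is the largest eigenvalue of `TTᴴ`. A Schur complement
reduces `det(I − G·diag(δI, δ_cI, Δ_f))` to `det(I − TΔ_f)`, so `max(|δ|, |δ_c|, ‖Δ_f‖) < m`
would lie in the set whose infimum is `m`.
-/

open scoped Matrix.Norms.L2Operator

namespace Matrix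

section Blocks

variable {k l m o R : Type*} [Fintype k] [Fintype l] [Fintype m] [Fintype o]
  [DecidableEq l] [DecidableEq m] [CommRing R]

theorem det_one_sub_fromBlocks_zero_mul_fromBlocks_diag (U : Matrix l o R) (V : Matrix m k R)
    (D : Matrix k l R) (Δ : Matrix o m R) :
    (1 - fromBlocks 0 U V 0 * fromBlocks D 0 0 Δ).det = (1 - V * D * U * Δ).det := by
  simp only [fromBlocks_multiply, Matrix.zero_mul, Matrix.mul_zero, add_zero, zero_add]
  rw [← fromBlocks_one, sub_eq_add_neg, fromBlocks_neg, fromBlocks_add]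
  simp only [neg_zero, add_zero, zero_add]
  rw [det_fromBlocks_one₁₁, Matrix.neg_mul, Matrix.mul_neg, neg_neg, Matrix.mul_assoc (V * D)]

end Blocks

section Destabilizer

variable {m n : Type*} [Fintype m] [Fintype n] [DecidableEq m] [DecidableEq n]

open scoped MatrixOrder ComplexOrder in
theorem norm_sq_mem_spectrum_mul_conjTranspose [Nonempty m] (T : Matrix m n ℂ) :
    ‖T‖ ^ 2 ∈ spectrum ℝ (T * Tᴴ) := by
  have hnorm : ‖T * Tᴴ‖ = ‖T‖ ^ 2 := by
    simpa [sq, l2_opNorm_conjTranspose] using l2_opNorm_conjTranspose_mul_self Tᴴ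
  exact hnorm ▸
    CStarAlgebra.norm_mem_spectrum_of_nonneg (posSemidef_self_mul_conjTranspose T).nonneg

theorem det_one_sub_mul_inv_norm_sq_smul_conjTranspose (T : Matrix m n ℂ) (hT : T ≠ 0) :
    (1 - T * (((‖T‖ ^ 2 : ℝ) : ℂ)⁻¹ • Tᴴ)).det = 0 := by
  have : Nonempty m := by
    by_contra h
    exact hT (by ext i; exact (not_nonempty_iff.mp h).elim i)
  have hc : ((‖T‖ ^ 2 : ℝ) : ℂ) ≠ 0 := by simpa using hT
  have hsing := spectrum.mem_iff.mp (norm_sq_mem_spectrum_mul_conjTranspose T)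
  rw [isUnit_iff_isUnit_det, isUnit_iff_ne_zero, not_not, Algebra.algebraMap_eq_smul_one,
    ← Complex.coe_smul] at hsing
  have hfactor : 1 - T * (((‖T‖ ^ 2 : ℝ) : ℂ)⁻¹ • Tᴴ)
      = ((‖T‖ ^ 2 : ℝ) : ℂ)⁻¹ • (((‖T‖ ^ 2 : ℝ) : ℂ) • 1 - T * Tᴴ) := by
    rw [smul_sub, smul_smul, inv_mul_cancel₀ hc, one_smul, Matrix.mul_smul]
  rw [hfactor, det_smul, hsing, mul_zero]

theorem norm_inv_norm_sq_smul_conjTranspose (T : Matrix m n ℂ) :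
    ‖((‖T‖ ^ 2 : ℝ) : ℂ)⁻¹ • Tᴴ‖ = ‖T‖⁻¹ := by
  rw [norm_smul, l2_opNorm_conjTranspose, norm_inv, Complex.norm_real,
    Real.norm_of_nonneg (by positivity)]
  rcases eq_or_ne ‖T‖ 0 with h | h
  · simp [h]
  · field_simp

theorem exists_norm_eq_inv_norm_and_det_one_sub_mul_eq_zero (T : Matrix m n ℂ) (hT : T ≠ 0) :
    ∃ Δ : Matrix n m ℂ, ‖Δ‖ = ‖T‖⁻¹ ∧ (1 - T * Δ).det = 0 :=
  ⟨_, norm_inv_norm_sq_smul_conjTranspose T, det_one_sub_mul_inv_norm_sq_smul_conjTranspose T hT⟩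

end Destabilizer

end Matrix

theorem thm_IVA_perturbed_robust_performance_general
    {n p : ℕ}
    (A S : Matrix (Fin n) (Fin n) ℂ) (Cu Sc : Matrix (Fin p) (Fin n) ℂ) (s : ℂ)
    (G : Matrix ((Fin n ⊕ Fin n) ⊕ Fin p) ((Fin n ⊕ Fin n) ⊕ Fin n) ℂ)
    (hG : G = Matrix.fromBlocks
        (0 : Matrix (Fin n ⊕ Fin n) (Fin n ⊕ Fin n) ℂ)
        (Matrix.fromRows (1 : Matrix (Fin n) (Fin n) ℂ) (1 : Matrix (Fin n) (Fin n) ℂ))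
        (Matrix.fromCols (Cu * (s • (1 : Matrix (Fin n) (Fin n) ℂ) - A)⁻¹ * S) Sc)
        (0 : Matrix (Fin p) (Fin n) ℂ))
    (P : Set ℝ)
    (hP : P = {x : ℝ | ∃ (δ' δc' : ℝ) (Δf : Matrix (Fin n) (Fin p) ℂ),
        x = max |δ'| (max |δc'| ‖Δf‖) ∧
        ((1 : Matrix ((Fin n ⊕ Fin n) ⊕ Fin p) ((Fin n ⊕ Fin n) ⊕ Fin p) ℂ)
          - G * Matrix.fromBlocks
              (Matrix.fromBlocks ((δ' : ℂ) • (1 : Matrix (Fin n) (Fin n) ℂ)) 0 0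
                ((δc' : ℂ) • (1 : Matrix (Fin n) (Fin n) ℂ)))
              0 0 Δf).det = 0})
    (hm : 0 < sInf P) :
    ∀ δ δc : ℝ, max |δ| |δc| < sInf P →
      ‖Cu * (s • (1 : Matrix (Fin n) (Fin n) ℂ) - A)⁻¹ * ((δ : ℂ) • S)
          + (δc : ℂ) • Sc‖ ≤ 1 / sInf P := by
  intro δ δc hδ
  set T := Cu * (s • (1 : Matrix (Fin n) (Fin n) ℂ) - A)⁻¹ * ((δ : ℂ) • S) + (δc : ℂ) • Sc
  by_contra! hT
  have hT0 : T ≠ 0 := norm_pos_iff.mp ((one_div_pos.mpr hm).trans hT)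
  obtain ⟨Δf, hΔnorm, hΔdet⟩ := Matrix.exists_norm_eq_inv_norm_and_det_one_sub_mul_eq_zero T hT0
  have hmem : max |δ| (max |δc| ‖Δf‖) ∈ P := by
    refine hP ▸ ⟨δ, δc, Δf, rfl, ?_⟩
    rw [hG, Matrix.det_one_sub_fromBlocks_zero_mul_fromBlocks_diag,
      Matrix.fromCols_mul_fromBlocks, Matrix.fromCols_mul_fromRows]
    simpa only [T, Complex.coe_smul, Matrix.mul_smul, Matrix.mul_one, Matrix.mul_zero, add_zero,
      zero_add] using hΔdet
  have hbdd : BddBelow P := ⟨0, by rw [hP]; rintro _ ⟨_, _, _, rfl, -⟩; positivity⟩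
  have hΔ : ‖Δf‖ < sInf P := by
    rw [hΔnorm]
    exact inv_lt_of_inv_lt₀ hm (by rwa [one_div] at hT)
  exact (csInf_le hbdd hmem).not_gt
    (max_lt ((le_max_left _ _).trans_lt hδ) (max_lt ((le_max_right _ _).trans_lt hδ) hΔ))

/-- Theorem IVA: robust performance in the perturbed formulation.  With
`G = [[0,0,I],[0,0,I],[CuΦ⁻¹S, S_c, 0]]` and
`m = inf { max(|δ'|,|δ_c'|,‖Δ_f‖) : det(I − G·block-diag(δ'I, δ_c'I, Δ_f)) = 0 }`,
for all real `δ, δ_c` with `max(|δ|,|δ_c|) < m`, `‖CuΦ⁻¹δS + δ_c S_c‖ ≤ 1/m`. -/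
theorem thm_IVA_perturbed_robust_performance
    {n p : ℕ}
    (A S : Matrix (Fin n) (Fin n) ℂ) (Cu Sc : Matrix (Fin p) (Fin n) ℂ) (s : ℂ)
    (hΦ : IsUnit (s • (1 : Matrix (Fin n) (Fin n) ℂ) - A))
    (G : Matrix ((Fin n ⊕ Fin n) ⊕ Fin p) ((Fin n ⊕ Fin n) ⊕ Fin n) ℂ)
    (hG : G = Matrix.fromBlocks
        (0 : Matrix (Fin n ⊕ Fin n) (Fin n ⊕ Fin n) ℂ)
        (Matrix.fromRows (1 : Matrix (Fin n) (Fin n) ℂ) (1 : Matrix (Fin n) (Fin n) ℂ))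
        (Matrix.fromCols (Cu * (s • (1 : Matrix (Fin n) (Fin n) ℂ) - A)⁻¹ * S) Sc)
        (0 : Matrix (Fin p) (Fin n) ℂ))
    (P : Set ℝ)
    (hP : P = {x : ℝ | ∃ (δ' δc' : ℝ) (Δf : Matrix (Fin n) (Fin p) ℂ),
        x = max |δ'| (max |δc'| ‖Δf‖) ∧
        ((1 : Matrix ((Fin n ⊕ Fin n) ⊕ Fin p) ((Fin n ⊕ Fin n) ⊕ Fin p) ℂ)
          - G * Matrix.fromBlocks
              (Matrix.fromBlocks ((δ' : ℂ) • (1 : Matrix (Fin n) (Fin n) ℂ)) 0 0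
                ((δc' : ℂ) • (1 : Matrix (Fin n) (Fin n) ℂ)))
              0 0 Δf).det = 0})
    (hne : P.Nonempty) (hm : 0 < sInf P) :
    ∀ δ δc : ℝ, max |δ| |δc| < sInf P →
      ‖Cu * (s • (1 : Matrix (Fin n) (Fin n) ℂ) - A)⁻¹ * ((δ : ℂ) • S)
          + (δc : ℂ) • Sc‖ ≤ 1 / sInf P :=
  thm_IVA_perturbed_robust_performance_general A S Cu Sc s G hG P hP hm
end

section
/- Let A and S be n×n complex matrices, Cu and S_c p×n complex matrices, δ, δ_c ∈ ℝ, and s ∈ ℂ with Φ := sI − A invertible. Then ‖Cu·Φ⁻¹·δS + δ_c·S_c‖ ≤ ‖[Cu·Φ⁻¹·S , S_c]‖ · √(δ² + δ_c²), where [Cu·Φ⁻¹·S , S_c] denotes the p×2n matrix obtained by horizontal block concatenation and ‖·‖ is the L2 operator norm. -/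
/-!
Factor `Cu Φ⁻¹ (δ S) + δ_c S_c = [Cu Φ⁻¹ S, S_c] · R` with `R = [δ I; δ_c I]`. Since
`Rᴴ R = (δ² + δ_c²) I`, the C⋆-identity `‖Rᴴ R‖ = ‖R‖²` gives `‖R‖ ≤ √(δ² + δ_c²)`, and
submultiplicativity of the operator norm finishes.
-/

open scoped Matrix.Norms.L2Operator Matrix

section L2OpNorm

variable {𝕜 m n : Type*} [RCLike 𝕜] [Fintype m] [Fintype n] [DecidableEq n]

lemma Matrix.l2_opNorm_smul_one_le (c : 𝕜) : ‖c • (1 : Matrix n n 𝕜)‖ ≤ ‖c‖ := by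
  rw [Matrix.smul_one_eq_diagonal, Matrix.l2_opNorm_diagonal]
  exact pi_norm_const_le c

lemma Matrix.conjTranspose_fromRows_smul_one_mul_self (a b : 𝕜) :
    (Matrix.fromRows (a • (1 : Matrix n n 𝕜)) (b • (1 : Matrix n n 𝕜)))ᴴ
        * Matrix.fromRows (a • (1 : Matrix n n 𝕜)) (b • (1 : Matrix n n 𝕜))
      = ((‖a‖ ^ 2 + ‖b‖ ^ 2 : ℝ) : 𝕜) • (1 : Matrix n n 𝕜) := by
  rw [Matrix.conjTranspose_fromRows_eq_fromCols_conjTranspose, Matrix.fromCols_mul_fromRows]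
  simp only [Matrix.conjTranspose_smul, Matrix.conjTranspose_one, Matrix.smul_mul,
    Matrix.one_mul, smul_smul, ← add_smul, RCLike.star_def, RCLike.conj_mul]
  congr 1
  push_cast
  rfl

lemma Matrix.l2_opNorm_fromRows_smul_one_le (a b : 𝕜) :
    ‖Matrix.fromRows (a • (1 : Matrix n n 𝕜)) (b • (1 : Matrix n n 𝕜))‖
      ≤ √(‖a‖ ^ 2 + ‖b‖ ^ 2) := by
  apply Real.le_sqrt_of_sq_le
  calc ‖Matrix.fromRows (a • (1 : Matrix n n 𝕜)) (b • (1 : Matrix n n 𝕜))‖ ^ 2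
      = ‖((‖a‖ ^ 2 + ‖b‖ ^ 2 : ℝ) : 𝕜) • (1 : Matrix n n 𝕜)‖ := by
        rw [← Matrix.conjTranspose_fromRows_smul_one_mul_self,
          Matrix.l2_opNorm_conjTranspose_mul_self, sq]
    _ ≤ ‖((‖a‖ ^ 2 + ‖b‖ ^ 2 : ℝ) : 𝕜)‖ := Matrix.l2_opNorm_smul_one_le _
    _ = ‖a‖ ^ 2 + ‖b‖ ^ 2 := by rw [RCLike.norm_ofReal, abs_of_nonneg (by positivity)]

lemma Matrix.l2_opNorm_smul_add_smul_le (a b : 𝕜) (B C : Matrix m n 𝕜) :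
    ‖a • B + b • C‖ ≤ ‖Matrix.fromCols B C‖ * √(‖a‖ ^ 2 + ‖b‖ ^ 2) := by
  have hfactor : a • B + b • C
      = Matrix.fromCols B C * Matrix.fromRows (a • (1 : Matrix n n 𝕜)) (b • (1 : Matrix n n 𝕜)) := by
    rw [Matrix.fromCols_mul_fromRows, Matrix.mul_smul, Matrix.mul_smul, Matrix.mul_one,
      Matrix.mul_one]
  rw [hfactor]
  exact (Matrix.l2_opNorm_mul _ _).trans
    (mul_le_mul_of_nonneg_left (Matrix.l2_opNorm_fromRows_smul_one_le a b) (norm_nonneg _))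

end L2OpNorm

theorem direct_bound_Tp_general
    {n p : ℕ}
    (A S : Matrix (Fin n) (Fin n) ℂ) (Cu Sc : Matrix (Fin p) (Fin n) ℂ)
    (δ δc : ℝ) (s : ℂ) :
    ‖Cu * (s • (1 : Matrix (Fin n) (Fin n) ℂ) - A)⁻¹ * ((δ : ℂ) • S) + (δc : ℂ) • Sc‖
      ≤ ‖Matrix.fromCols (Cu * (s • (1 : Matrix (Fin n) (Fin n) ℂ) - A)⁻¹ * S) Sc‖
        * Real.sqrt (δ ^ 2 + δc ^ 2) := by
  simpa only [Matrix.mul_smul, Complex.norm_real, Real.norm_eq_abs, sq_abs] using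
    Matrix.l2_opNorm_smul_add_smul_le (δ : ℂ) δc (Cu * (s • 1 - A)⁻¹ * S) Sc

/-- Direct (SSV-free) bound on the perturbed-scaled error transfer matrix:
`‖CuΦ⁻¹δS + δ_c S_c‖ ≤ ‖[CuΦ⁻¹S , S_c]‖ √(δ² + δ_c²)`. -/
theorem direct_bound_Tp
    {n p : ℕ}
    (A S : Matrix (Fin n) (Fin n) ℂ) (Cu Sc : Matrix (Fin p) (Fin n) ℂ)
    (δ δc : ℝ) (s : ℂ)
    (hΦ : IsUnit (s • (1 : Matrix (Fin n) (Fin n) ℂ) - A)) :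
    ‖Cu * (s • (1 : Matrix (Fin n) (Fin n) ℂ) - A)⁻¹ * ((δ : ℂ) • S) + (δc : ℂ) • Sc‖
      ≤ ‖Matrix.fromCols (Cu * (s • (1 : Matrix (Fin n) (Fin n) ℂ) - A)⁻¹ * S) Sc‖
        * Real.sqrt (δ ^ 2 + δc ^ 2) :=
  direct_bound_Tp_general A S Cu Sc δ δc s
end

section
/- Let A and S be n×n complex matrices, Cu and S_c p×n complex matrices, δ, δ_c ∈ ℝ, and s ∈ ℂ with Φ := sI − A invertible. Then the p×3n block matrix T := [Cu·Φ⁻¹ , Cu·Φ⁻¹·δS + δ_c·S_c] (horizontal block concatenation) satisfies ‖T‖ ≤ ‖Cu·Φ⁻¹‖ + ‖[Cu·Φ⁻¹·S , S_c]‖ · √(δ² + δ_c²), where ‖·‖ is the L2 operator norm. -/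
open scoped Matrix.Norms.L2Operator

/-! The second block factors as `[CuΦ⁻¹S, S_c] * [δI; δ_cI]`. By the C*-identity
`‖M‖² = ‖Mᴴ M‖`, stacking blocks costs at most `√(‖X‖² + ‖Y‖²)`; this bounds both the outer
concatenation (crudely, by `‖X‖ + ‖Y‖`) and the factor `[δI; δ_cI]`. -/

namespace Matrix

variable {𝕜 : Type*} [RCLike 𝕜] {m m' n n' : Type*} [Fintype m] [Fintype m'] [Fintype n]
  [Fintype n'] [DecidableEq n] [DecidableEq n']

lemma l2_opNorm_fromRows_le (X : Matrix m n 𝕜) (Y : Matrix m' n 𝕜) :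
    ‖fromRows X Y‖ ≤ √(‖X‖ ^ 2 + ‖Y‖ ^ 2) := by
  have hgram : (fromRows X Y)ᴴ * fromRows X Y = Xᴴ * X + Yᴴ * Y := by
    rw [conjTranspose_fromRows_eq_fromCols_conjTranspose, fromCols_mul_fromRows]
  have hsq : ‖fromRows X Y‖ ^ 2 ≤ ‖X‖ ^ 2 + ‖Y‖ ^ 2 := by
    simpa only [sq, ← l2_opNorm_conjTranspose_mul_self, hgram] using norm_add_le _ _
  exact Real.le_sqrt_of_sq_le hsq

lemma l2_opNorm_fromCols_le_sqrt (X : Matrix m n 𝕜) (Y : Matrix m n' 𝕜) :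
    ‖Matrix.fromCols X Y‖ ≤ √(‖X‖ ^ 2 + ‖Y‖ ^ 2) := by
  classical
  rw [← l2_opNorm_conjTranspose, conjTranspose_fromCols_eq_fromRows_conjTranspose]
  simpa only [l2_opNorm_conjTranspose] using l2_opNorm_fromRows_le Xᴴ Yᴴ

lemma l2_opNorm_fromCols_le (X : Matrix m n 𝕜) (Y : Matrix m n' 𝕜) :
    ‖Matrix.fromCols X Y‖ ≤ ‖X‖ + ‖Y‖ :=
  (l2_opNorm_fromCols_le_sqrt X Y).trans <| Real.sqrt_le_left (by positivity) |>.mpr <| by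
    nlinarith [norm_nonneg X, norm_nonneg Y]

lemma l2_opNorm_smul_one_le_s13 (a : 𝕜) : ‖a • (1 : Matrix n n 𝕜)‖ ≤ ‖a‖ := by
  rw [smul_one_eq_diagonal, l2_opNorm_diagonal]
  exact pi_norm_const_le a

end Matrix

theorem direct_bound_Tp_with_initial_error_general
    {n p : ℕ}
    (A S : Matrix (Fin n) (Fin n) ℂ) (Cu Sc : Matrix (Fin p) (Fin n) ℂ)
    (δ δc : ℝ) (s : ℂ) :
    ‖Matrix.fromCols
        (Cu * (s • (1 : Matrix (Fin n) (Fin n) ℂ) - A)⁻¹)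
        (Cu * (s • (1 : Matrix (Fin n) (Fin n) ℂ) - A)⁻¹ * ((δ : ℂ) • S) + (δc : ℂ) • Sc)‖
      ≤ ‖Cu * (s • (1 : Matrix (Fin n) (Fin n) ℂ) - A)⁻¹‖
        + ‖Matrix.fromCols (Cu * (s • (1 : Matrix (Fin n) (Fin n) ℂ) - A)⁻¹ * S) Sc‖
          * Real.sqrt (δ ^ 2 + δc ^ 2) := by
  set B := Cu * (s • (1 : Matrix (Fin n) (Fin n) ℂ) - A)⁻¹
  set D : Matrix (Fin n ⊕ Fin n) (Fin n) ℂ := Matrix.fromRows ((δ : ℂ) • 1) ((δc : ℂ) • 1)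
  have hfactor : B * ((δ : ℂ) • S) + (δc : ℂ) • Sc = Matrix.fromCols (B * S) Sc * D := by
    simp only [D, Matrix.fromCols_mul_fromRows, Matrix.mul_smul, Matrix.mul_one]
  have hD : ‖D‖ ≤ √(δ ^ 2 + δc ^ 2) := by
    refine (Matrix.l2_opNorm_fromRows_le _ _).trans (Real.sqrt_le_sqrt ?_)
    rw [← sq_abs δ, ← sq_abs δc]
    have hδ := Matrix.l2_opNorm_smul_one_le_s13 (n := Fin n) (δ : ℂ)
    have hδc := Matrix.l2_opNorm_smul_one_le_s13 (n := Fin n) (δc : ℂ)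
    rw [Complex.norm_real, Real.norm_eq_abs] at hδ hδc
    gcongr
  calc ‖Matrix.fromCols B (B * ((δ : ℂ) • S) + (δc : ℂ) • Sc)‖
      ≤ ‖B‖ + ‖Matrix.fromCols (B * S) Sc * D‖ := hfactor ▸ Matrix.l2_opNorm_fromCols_le _ _
    _ ≤ ‖B‖ + ‖Matrix.fromCols (B * S) Sc‖ * √(δ ^ 2 + δc ^ 2) := by
      gcongr
      exact (Matrix.l2_opNorm_mul _ _).trans (by gcongr)

/-- Direct (SSV-free) bound on the perturbed transfer matrix from `(z(0), ŵ_p)` to `ê`: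
`‖[CuΦ⁻¹ , CuΦ⁻¹δS + δ_c S_c]‖ ≤ ‖CuΦ⁻¹‖ + ‖[CuΦ⁻¹S , S_c]‖ √(δ² + δ_c²)`. -/
theorem direct_bound_Tp_with_initial_error
    {n p : ℕ}
    (A S : Matrix (Fin n) (Fin n) ℂ) (Cu Sc : Matrix (Fin p) (Fin n) ℂ)
    (δ δc : ℝ) (s : ℂ)
    (hΦ : IsUnit (s • (1 : Matrix (Fin n) (Fin n) ℂ) - A)) :
    ‖Matrix.fromCols
        (Cu * (s • (1 : Matrix (Fin n) (Fin n) ℂ) - A)⁻¹)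
        (Cu * (s • (1 : Matrix (Fin n) (Fin n) ℂ) - A)⁻¹ * ((δ : ℂ) • S) + (δc : ℂ) • Sc)‖
      ≤ ‖Cu * (s • (1 : Matrix (Fin n) (Fin n) ℂ) - A)⁻¹‖
        + ‖Matrix.fromCols (Cu * (s • (1 : Matrix (Fin n) (Fin n) ℂ) - A)⁻¹ * S) Sc‖
          * Real.sqrt (δ ^ 2 + δc ^ 2) :=
  direct_bound_Tp_with_initial_error_general A S Cu Sc δ δc s
end

section
/- Let J, Δ, γ be real numbers with J_eff := √(Δ² + 4J²) > 0, and let A := A_H + A_L be the real 3×3 matrix with A_H := [[0, Δ, 0],[−Δ, 0, −2J],[0, 2J, 0]] and A_L := (−γ/J_eff²)·[[Δ², 0, 2ΔJ],[0, J_eff², 0],[2ΔJ, 0, 4J²]]. Then, viewing A as a complex matrix, its characteristic polynomial equals X·(X − (−γ + i·J_eff))·(X − (−γ − i·J_eff)); in particular the eigenvalues of A are 0 and −γ ± i·J_eff, A is singular, and if moreover γ ≥ 0 then A has rank 2. -/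
/-!
Write `ω = (2J, 0, -Δ)`, so that `|ω| = J_eff`. Then `A_H v = ω × v`, and
`A_L = -γ (1 - ω ωᵀ / |ω|²)` is `-γ` times the orthogonal projection onto `ω⊥`. Hence `A` kills
`ω` and acts on the plane `ω⊥` as a rotation with angular velocity `J_eff` damped at rate `γ`,
so its characteristic polynomial is `X ((X + γ)² + J_eff²)`. As `J_eff > 0`, the eigenvalue `0` is
a simple root, and since geometric multiplicity is bounded by algebraic multiplicity,
the kernel of `A` is a line.
-/

open Polynomial Matrix

section CrossMatrix

variable {R : Type*} [CommRing R]

def crossMatrix (ω : Fin 3 → R) : Matrix (Fin 3) (Fin 3) R :=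
  LinearMap.toMatrix' (crossProduct ω)

theorem crossMatrix_eq (ω : Fin 3 → R) :
    crossMatrix ω = !![0, -ω 2, ω 1; ω 2, 0, -ω 0; -ω 1, ω 0, 0] := by
  ext i j
  fin_cases i <;> fin_cases j <;> simp [crossMatrix, LinearMap.toMatrix'_apply, cross_apply]

theorem charpoly_crossMatrix_sub_smul (ω : Fin 3 → R) (t : R) :
    (crossMatrix ω - t • ((ω ⬝ᵥ ω) • 1 - vecMulVec ω ω)).charpoly =
      X * (X ^ 2 + C (2 * (t * (ω ⬝ᵥ ω))) * X + C ((t * (ω ⬝ᵥ ω)) ^ 2 + ω ⬝ᵥ ω)) := by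
  rw [charpoly, det_fin_three, crossMatrix_eq]
  simp only [charmatrix_apply_eq, charmatrix_apply_ne, Matrix.sub_apply, Matrix.smul_apply,
    one_apply_eq, one_apply_ne, vecMulVec_apply, of_apply, cons_val', cons_val_zero, cons_val_one,
    cons_val, cons_val_fin_one, dotProduct, Fin.sum_univ_three, smul_eq_mul, ne_eq, Fin.reduceEq,
    not_false_eq_true, map_neg, map_mul, map_sub, map_add, map_pow, map_zero, map_one, C_ofNat]
  ring

end CrossMatrix

theorem Polynomial.rootMultiplicity_zero_X_mul {R : Type*} [CommRing R] [IsDomain R] {q : R[X]}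
    (hq : ¬q.IsRoot 0) : (X * q).rootMultiplicity 0 = 1 := by
  have hq0 : q ≠ 0 := by rintro rfl; simp at hq
  rw [rootMultiplicity_mul (mul_ne_zero X_ne_zero hq0), rootMultiplicity_eq_zero hq,
    ← sub_zero X, ← C_0, rootMultiplicity_X_sub_C_self]

theorem Matrix.rank_eq_card_sub_one_of_rootMultiplicity_charpoly_zero_eq_one
    {K n : Type*} [Field K] [Fintype n] [DecidableEq n] (M : Matrix n n K)
    (h : M.charpoly.rootMultiplicity 0 = 1) : M.rank = Fintype.card n - 1 := by
  have hker : Module.finrank K (LinearMap.ker M.toLin') = 1 := by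
    rw [← Module.End.eigenspace_zero]
    refine le_antisymm ?_ ?_
    · simpa [h] using LinearMap.finrank_eigenspace_le M.toLin' 0
    · rw [Submodule.one_le_finrank_iff, ← Module.End.hasEigenvalue_iff,
        Module.End.hasEigenvalue_iff_isRoot_charpoly, charpoly_toLin']
      exact (rootMultiplicity_pos (charpoly_monic M).ne_zero).mp (by omega)
  have := LinearMap.finrank_range_add_finrank_ker M.toLin'
  rw [hker, Module.finrank_fintype_fun_eq_card] at this
  rw [Matrix.rank, ← toLin'_apply']
  omega

theorem Complex.X_sq_add_C_mul_X_add_C_eq_mul (p q : ℂ) :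
    (X ^ 2 + C (2 * p) * X + C (p ^ 2 + q ^ 2) : ℂ[X]) =
      (X - C (-p + q * I)) * (X - C (-p - q * I)) := by
  have hI : C I ^ 2 = -1 := by rw [← C_pow, I_sq, C_neg, C_1]
  simp only [map_add, map_mul, map_sub, map_neg, map_pow, C_ofNat]
  linear_combination (C q) ^ 2 * hI

/-- The Bloch-equation generator `A = A_H + A_L` of two coupled qubits has characteristic
polynomial `X(X − (−γ + iJ_eff))(X − (−γ − iJ_eff))`; in particular its eigenvalues are
`0` and `−γ ± iJ_eff`, it is singular, and for `γ ≥ 0` it has rank 2. -/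
theorem bloch_generator_spectrum
    (J Δ γ Jeff : ℝ)
    (hJeff : Jeff = Real.sqrt (Δ ^ 2 + 4 * J ^ 2)) (hpos : 0 < Jeff)
    (AH AL : Matrix (Fin 3) (Fin 3) ℝ)
    (hAH : AH = !![0, Δ, 0; -Δ, 0, -2 * J; 0, 2 * J, 0])
    (hAL : AL = (-γ / Jeff ^ 2) •
      !![Δ ^ 2, 0, 2 * Δ * J; 0, Jeff ^ 2, 0; 2 * Δ * J, 0, 4 * J ^ 2]) :
    Matrix.charpoly ((AH + AL).map (Complex.ofReal ·))
        = Polynomial.X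
          * (Polynomial.X - Polynomial.C (-(γ : ℂ) + (Jeff : ℂ) * Complex.I))
          * (Polynomial.X - Polynomial.C (-(γ : ℂ) - (Jeff : ℂ) * Complex.I)) ∧
    spectrum ℂ ((AH + AL).map (Complex.ofReal ·))
        = {0, -(γ : ℂ) + (Jeff : ℂ) * Complex.I, -(γ : ℂ) - (Jeff : ℂ) * Complex.I} ∧
    (AH + AL).det = 0 ∧
    (0 ≤ γ → (AH + AL).rank = 2) := by
  have hJeff_sq : Jeff ^ 2 = Δ ^ 2 + 4 * J ^ 2 := by
    rw [hJeff, Real.sq_sqrt (by positivity)]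
  set ω : Fin 3 → ℝ := ![2 * J, 0, -Δ]
  have hω : ω ⬝ᵥ ω = Jeff ^ 2 := by
    simp only [ω, dotProduct, Fin.sum_univ_three, cons_val_zero, cons_val_one, cons_val,
      hJeff_sq]
    ring
  have hA : AH + AL = crossMatrix ω - (γ / Jeff ^ 2) • ((ω ⬝ᵥ ω) • 1 - vecMulVec ω ω) := by
    rw [hAH, hAL, crossMatrix_eq, hJeff_sq]
    ext i j
    fin_cases i <;> fin_cases j <;> simp [ω, dotProduct, Fin.sum_univ_three] <;> ring
  have hcharpoly : (AH + AL).charpoly = X * (X ^ 2 + C (2 * γ) * X + C (γ ^ 2 + Jeff ^ 2)) := by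
    rw [hA, charpoly_crossMatrix_sub_smul, hω, div_mul_cancel₀ γ (by positivity)]
  have hcharpoly_ℂ : ((AH + AL).map (Complex.ofReal ·)).charpoly =
      X * (X - C (-(γ : ℂ) + Jeff * Complex.I)) * (X - C (-(γ : ℂ) - Jeff * Complex.I)) := by
    have hmap : ((AH + AL).map (Complex.ofReal ·)).charpoly =
        (AH + AL).charpoly.map Complex.ofRealHom :=
      charpoly_map (AH + AL) Complex.ofRealHom
    rw [hmap, hcharpoly, mul_assoc, ← Complex.X_sq_add_C_mul_X_add_C_eq_mul]
    simp
  refine ⟨hcharpoly_ℂ, ?_, ?_, fun _ => ?_⟩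
  · ext μ
    rw [mem_spectrum_iff_isRoot_charpoly, hcharpoly_ℂ]
    simp only [IsRoot.def, eval_mul, eval_sub, eval_X, eval_C, mul_eq_zero, sub_eq_zero,
      Set.mem_insert_iff, Set.mem_singleton_iff, or_assoc]
  · rw [det_eq_sign_charpoly_coeff, hcharpoly, coeff_X_mul_zero, mul_zero]
  · rw [rank_eq_card_sub_one_of_rootMultiplicity_charpoly_zero_eq_one _ ?_, Fintype.card_fin]
    rw [hcharpoly, rootMultiplicity_zero_X_mul]
    simpa using (by positivity : γ ^ 2 + Jeff ^ 2 ≠ 0)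
end

section
/- Let J, Δ, γ be real numbers with J_eff := √(Δ² + 4J²) > 0, and let A := A_H + A_L be the real 3×3 matrix with A_H := [[0, Δ, 0],[−Δ, 0, −2J],[0, 2J, 0]] and A_L := (−γ/J_eff²)·[[Δ², 0, 2ΔJ],[0, J_eff², 0],[2ΔJ, 0, 4J²]]. Then for all t ∈ ℝ, the transfer fidelity F_u(t) := (1/2)·(1 − (exp(t·A)·e₃)₃), where exp is the matrix exponential, e₃ = (0,0,1) and (·)₃ denotes the third component, satisfies F_u(t) = (2J²/J_eff²)·(1 − e^{−γt}·cos(J_eff·t)). -/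
/-!
`A_H` is the cross product with `w = (2J, 0, -Δ)`, of length `J_eff`, and `A_L = -γ (1 - P_w)`
with `P_w` the orthogonal projection onto `w`. Hence `A` kills `w` and acts on `w^⊥` as `-γ`
plus a rotation with angular velocity `J_eff`. Splitting `e₃` along `w` and `w^⊥` gives an
explicit solution `r(t) = P_w e₃ + e^{-γt} (cos (J_eff t) u + sin (J_eff t) v)` of `r' = A r`
with `r(0) = e₃`, where `u = e₃ - P_w e₃` and `v = (w / J_eff) × u`; by uniqueness of solutions
of linear ODEs it equals `exp(tA) e₃`, and its third component is the claimed formula.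
-/

open Matrix Real

section LinearODE

variable {n : Type*} [Fintype n] [DecidableEq n]

theorem Matrix.hasDerivAt_exp_smul_mulVec (A : Matrix n n ℝ) (v : n → ℝ) (t : ℝ) :
    HasDerivAt (fun s : ℝ => NormedSpace.exp (s • A) *ᵥ v)
      (A *ᵥ (NormedSpace.exp (t • A) *ᵥ v)) t := by
  rw [mulVec_mulVec]
  open scoped Matrix.Norms.Operator in
  exact ((mulVecBilin ℝ ℝ).flip v).toContinuousLinearMap.hasFDerivAt.comp_hasDerivAt t
    (hasDerivAt_exp_smul_const' A t)

theorem Matrix.exp_smul_mulVec_eq_of_hasDerivAt (A : Matrix n n ℝ) {r : ℝ → n → ℝ}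
    (hr : ∀ t, HasDerivAt r (A *ᵥ r t) t) (t : ℝ) :
    NormedSpace.exp (t • A) *ᵥ r 0 = r t := by
  have h := ODE_solution_unique_univ (v := fun _ => A.mulVecLin.toContinuousLinearMap)
    (s := fun _ => Set.univ) (t₀ := 0)
    (fun _ => (ContinuousLinearMap.lipschitz _).lipschitzOnWith)
    (fun t => ⟨A.hasDerivAt_exp_smul_mulVec (r 0) t, trivial⟩) (fun t => ⟨hr t, trivial⟩)
    (by simp)
  exact congrFun h t

end LinearODE

section DampedOscillation

variable (γ ω : ℝ)

noncomputable def dampedCos (t : ℝ) : ℝ := exp (-γ * t) * cos (ω * t)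

noncomputable def dampedSin (t : ℝ) : ℝ := exp (-γ * t) * sin (ω * t)

theorem hasDerivAt_dampedCos (t : ℝ) :
    HasDerivAt (dampedCos γ ω) (-γ * dampedCos γ ω t - ω * dampedSin γ ω t) t := by
  refine ((((hasDerivAt_id t).const_mul (-γ)).exp).mul
    (((hasDerivAt_id t).const_mul ω).cos)).congr_deriv ?_
  simp only [dampedCos, dampedSin, id]
  ring

theorem hasDerivAt_dampedSin (t : ℝ) :
    HasDerivAt (dampedSin γ ω) (-γ * dampedSin γ ω t + ω * dampedCos γ ω t) t := by
  refine ((((hasDerivAt_id t).const_mul (-γ)).exp).mul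
    (((hasDerivAt_id t).const_mul ω).sin)).congr_deriv ?_
  simp only [dampedCos, dampedSin, id]
  ring

end DampedOscillation

section BlochEquation

variable (J Δ γ Jeff : ℝ)

noncomputable def blochGenerator : Matrix (Fin 3) (Fin 3) ℝ :=
  !![0, Δ, 0; -Δ, 0, -2 * J; 0, 2 * J, 0] + (-γ / Jeff ^ 2) •
    !![Δ ^ 2, 0, 2 * Δ * J; 0, Jeff ^ 2, 0; 2 * Δ * J, 0, 4 * J ^ 2]

noncomputable def blochSteadyState : Fin 3 → ℝ := (Jeff ^ 2)⁻¹ • ![-(2 * J * Δ), 0, Δ ^ 2]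

noncomputable def blochCosMode : Fin 3 → ℝ := (Jeff ^ 2)⁻¹ • ![2 * J * Δ, 0, 4 * J ^ 2]

noncomputable def blochSinMode : Fin 3 → ℝ := ![0, -(2 * J / Jeff), 0]

noncomputable def blochSolution (t : ℝ) : Fin 3 → ℝ :=
  blochSteadyState J Δ Jeff + dampedCos γ Jeff t • blochCosMode J Δ Jeff +
    dampedSin γ Jeff t • blochSinMode J Jeff

theorem blochGenerator_mulVec_blochSteadyState :
    blochGenerator J Δ γ Jeff *ᵥ blochSteadyState J Δ Jeff = 0 := by
  ext i
  fin_cases i <;>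
    simp [blochGenerator, blochSteadyState, mulVec, dotProduct, Fin.sum_univ_three] <;> ring

variable {J Δ Jeff}

theorem blochGenerator_mulVec_blochCosMode (hJeff : Jeff ^ 2 = Δ ^ 2 + 4 * J ^ 2)
    (hpos : Jeff ≠ 0) :
    blochGenerator J Δ γ Jeff *ᵥ blochCosMode J Δ Jeff =
      -γ • blochCosMode J Δ Jeff + Jeff • blochSinMode J Jeff := by
  ext i
  fin_cases i <;>
    simp [blochGenerator, blochCosMode, blochSinMode, mulVec, dotProduct, Fin.sum_univ_three] <;>
    field_simp <;> grind

theorem blochGenerator_mulVec_blochSinMode (hpos : Jeff ≠ 0) :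
    blochGenerator J Δ γ Jeff *ᵥ blochSinMode J Jeff =
      -Jeff • blochCosMode J Δ Jeff - γ • blochSinMode J Jeff := by
  ext i
  fin_cases i <;>
    simp [blochGenerator, blochCosMode, blochSinMode, mulVec, dotProduct, Fin.sum_univ_three] <;>
    field_simp
  ring

theorem blochSolution_zero (hJeff : Jeff ^ 2 = Δ ^ 2 + 4 * J ^ 2) (hpos : Jeff ≠ 0) :
    blochSolution J Δ γ Jeff 0 = ![0, 0, 1] := by
  ext i
  fin_cases i <;>
    simp [blochSolution, blochSteadyState, blochCosMode, blochSinMode, dampedCos, dampedSin]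
  rw [← mul_add, ← hJeff, inv_mul_cancel₀ (pow_ne_zero 2 hpos)]

theorem hasDerivAt_blochSolution (hJeff : Jeff ^ 2 = Δ ^ 2 + 4 * J ^ 2) (hpos : Jeff ≠ 0)
    (t : ℝ) :
    HasDerivAt (blochSolution J Δ γ Jeff)
      (blochGenerator J Δ γ Jeff *ᵥ blochSolution J Δ γ Jeff t) t := by
  have hcos := (hasDerivAt_dampedCos γ Jeff t).smul_const (blochCosMode J Δ Jeff)
  have hsin := (hasDerivAt_dampedSin γ Jeff t).smul_const (blochSinMode J Jeff)
  refine ((hcos.const_add (blochSteadyState J Δ Jeff)).add hsin).congr_deriv ?_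
  rw [blochSolution, mulVec_add, mulVec_add, mulVec_smul, mulVec_smul,
    blochGenerator_mulVec_blochSteadyState, blochGenerator_mulVec_blochCosMode γ hJeff hpos,
    blochGenerator_mulVec_blochSinMode γ hpos]
  module

end BlochEquation

/-- Analytic formula for the transfer fidelity of two coupled qubits:
with `r(0) = (0,0,1)`, `F_u(t) = ½(1 − (exp(tA)r(0))₃) = (2J²/J_eff²)(1 − e^{−γt}cos(J_eff t))`. -/
theorem transfer_fidelity_formula
    (J Δ γ Jeff : ℝ)
    (hJeff : Jeff = Real.sqrt (Δ ^ 2 + 4 * J ^ 2)) (hpos : 0 < Jeff)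
    (AH AL : Matrix (Fin 3) (Fin 3) ℝ)
    (hAH : AH = !![0, Δ, 0; -Δ, 0, -2 * J; 0, 2 * J, 0])
    (hAL : AL = (-γ / Jeff ^ 2) •
      !![Δ ^ 2, 0, 2 * Δ * J; 0, Jeff ^ 2, 0; 2 * Δ * J, 0, 4 * J ^ 2]) :
    ∀ t : ℝ,
      (1 / 2) * (1 - (NormedSpace.exp (t • (AH + AL))).mulVec ![0, 0, 1] 2)
        = (2 * J ^ 2 / Jeff ^ 2) * (1 - Real.exp (-γ * t) * Real.cos (Jeff * t)) := by
  intro t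
  have hJeff_sq : Jeff ^ 2 = Δ ^ 2 + 4 * J ^ 2 := by
    rw [hJeff, Real.sq_sqrt (by positivity)]
  have hsol : NormedSpace.exp (t • (AH + AL)) *ᵥ ![0, 0, 1] = blochSolution J Δ γ Jeff t := by
    rw [hAH, hAL, ← blochSolution_zero γ hJeff_sq hpos.ne']
    exact (blochGenerator J Δ γ Jeff).exp_smul_mulVec_eq_of_hasDerivAt
      (hasDerivAt_blochSolution γ hJeff_sq hpos.ne') t
  rw [hsol]
  simp only [blochSolution, blochSteadyState, blochCosMode, blochSinMode, dampedCos,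
    Pi.add_apply, Pi.smul_apply, smul_eq_mul, cons_val]
  field_simp
  linear_combination hJeff_sq
end
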